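/- arXiv:1511.01025 — 10 statements merged into one kernel-verified Lean document; each statement's English description precedes it below -/
import Mathlib

section
/- A finite simple graph G is a color-line graph if and only if there exists a family Q of cliques of G such that: (a) every vertex of G belongs to at most three members of Q, and every edge of G has both endpoints contained in at least one and in at most two members of Q; and (b) letting F be the set of edges of G whose endpoints are contained in exactly two members of Q and W the set of vertices of G belonging to exactly three members of Q, there exist maps e ↦ Q_e from F to Q and v ↦ Q_v from W to Q such that (b1) for every edge e ∈ F both endpoints of e lie in Q_e, and every v ∈ W satisfies v ∈ Q_v, and (b2) for all x, y ∈ F ∪ W: if x is contained in Q_y (for an edge x this means both endpoints of x lie in Q_y) then Q_x = Q_y, and otherwise Q_x ∩ Q_y = ∅. -/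
open SimpleGraph

/-- The color-line graph `CL(H)` of an edge-colored graph `(H, φ)`: vertices are the edges
of `H`, and two distinct edges are adjacent iff they share an endpoint or have equal colors. -/
def colorLineGraph {V C : Type*} (H : SimpleGraph V) (φ : H.edgeSet → C) :
    SimpleGraph H.edgeSet where
  Adj e f := e ≠ f ∧
    ((∃ v, v ∈ (e : Sym2 V) ∧ v ∈ (f : Sym2 V)) ∨ φ e = φ f)
  symm := by
    constructor
    rintro e f ⟨hne, h⟩
    refine ⟨hne.symm, ?_⟩
    rcases h with ⟨v, hv1, hv2⟩ | h
    · exact Or.inl ⟨v, hv2, hv1⟩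
    · exact Or.inr h.symm
  loopless := by constructor; rintro e ⟨hne, -⟩; exact hne rfl

/-- An edge coloring is proper if distinct edges sharing an endpoint get distinct colors. -/
def IsProperEdgeColoring {V C : Type*} (H : SimpleGraph V) (φ : H.edgeSet → C) : Prop :=
  ∀ e f : H.edgeSet, e ≠ f → (∃ v, v ∈ (e : Sym2 V) ∧ v ∈ (f : Sym2 V)) → φ e ≠ φ f

/-- `G` is a color-line graph: `G ≅ CL(H)` for some finite edge-colored graph `H`. -/
def IsColorLineGraph {α : Type*} (G : SimpleGraph α) : Prop :=
  ∃ (V C : Type) (_ : Fintype V) (H : SimpleGraph V) (φ : H.edgeSet → C),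
    Nonempty (G ≃g colorLineGraph H φ)

/-- `G` is a proper color-line graph: `G ≅ CL(H)` for some finite properly
edge-colored graph `H`. -/
def IsProperColorLineGraph {α : Type*} (G : SimpleGraph α) : Prop :=
  ∃ (V C : Type) (_ : Fintype V) (H : SimpleGraph V) (φ : H.edgeSet → C),
    IsProperEdgeColoring H φ ∧ Nonempty (G ≃g colorLineGraph H φ)

/-- `G` is a `k`-color-line graph: `G ≅ CL(H)` for some finite graph `H`
edge-colored with at most `k` colors. -/
def IsKColorLineGraph (k : ℕ) {α : Type*} (G : SimpleGraph α) : Prop :=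
  ∃ (V : Type) (_ : Fintype V) (H : SimpleGraph V) (φ : H.edgeSet → Fin k),
    Nonempty (G ≃g colorLineGraph H φ)

/-- `G` is a proper `k`-color-line graph: `G ≅ CL(H)` for some finite graph `H`
properly edge-colored with at most `k` colors. -/
def IsProperKColorLineGraph (k : ℕ) {α : Type*} (G : SimpleGraph α) : Prop :=
  ∃ (V : Type) (_ : Fintype V) (H : SimpleGraph V) (φ : H.edgeSet → Fin k),
    IsProperEdgeColoring H φ ∧ Nonempty (G ≃g colorLineGraph H φ)

/-- `G` is a line graph: `G ≅ L(H)` for some finite graph `H`. -/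
def IsLineGraph {α : Type*} (G : SimpleGraph α) : Prop :=
  ∃ (V : Type) (_ : Fintype V) (H : SimpleGraph V), Nonempty (G ≃g H.lineGraph)

variable {α : Type} [Fintype α] [DecidableEq α]

/-- The members of the family `𝒬` containing both endpoints of the edge `e`. -/
def edgeMembers (𝒬 : Finset (Finset α)) (e : Sym2 α) : Finset (Finset α) :=
  𝒬.filter (fun Q => ∀ x ∈ e, x ∈ Q)

/-- The members of the family `𝒬` containing the vertex `v`. -/
def vertMembers (𝒬 : Finset (Finset α)) (v : α) : Finset (Finset α) :=
  𝒬.filter (fun Q => v ∈ Q)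

/-!
A color-line graph is the same as a graph whose vertices carry a set of at most two *ends* and a
*color*, where distinct vertices share at most one end and two vertices are adjacent iff they
share an end or a color: the ends of a vertex are the endpoints of the
corresponding edge of `H`, and a vertex with fewer than two ends becomes an edge of `H` padded by
private vertices.

Given such a representation, the stars of the ends and the color classes form `𝒬`. A vertex lies
in at most two stars and one color class, two adjacent vertices in at most one common star and
one common color class, and if they lie in two common members they have the same color. So every
`Q_x` can be taken to be a color class, and color classes are disjoint or equal.

Conversely, (b2) makes the designated members `Q_x` (`x ∈ F ∪ W`) pairwise disjoint or equal, so
they serve as color classes, and the other members containing a vertex serve as its ends; there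
are at most two of them, since a vertex of `W` lies in its own `Q_v`. Two distinct vertices never
share two undesignated members: the edge joining them would lie in `F`, and `Q_e` would be one of
those two members.
-/

theorem mem_edgeMembers {𝒬 : Finset (Finset α)} {e : Sym2 α} {Q : Finset α} :
    Q ∈ edgeMembers 𝒬 e ↔ Q ∈ 𝒬 ∧ ∀ x ∈ e, x ∈ Q :=
  Finset.mem_filter

omit [Fintype α] in
theorem mem_vertMembers {𝒬 : Finset (Finset α)} {v : α} {Q : Finset α} :
    Q ∈ vertMembers 𝒬 v ↔ Q ∈ 𝒬 ∧ v ∈ Q :=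
  Finset.mem_filter

theorem mem_edgeMembers_mk {𝒬 : Finset (Finset α)} {a b : α} {Q : Finset α} :
    Q ∈ edgeMembers 𝒬 s(a, b) ↔ Q ∈ 𝒬 ∧ a ∈ Q ∧ b ∈ Q := by
  rw [mem_edgeMembers, Sym2.forall_mem_pair]

theorem Finset.eq_and_disjoint_of_mem {ι : Type*} {Q Q' : Finset ι} {P : Prop} {a : ι}
    (hQQ' : ¬ Disjoint Q Q' → Q = Q') (ha : a ∈ Q) (hPa : P → a ∈ Q') (hP : Q = Q' → P) :
    (P → Q = Q') ∧ (¬ P → Disjoint Q Q') :=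
  ⟨fun h => hQQ' (Finset.not_disjoint_iff.2 ⟨a, ha, hPa h⟩), fun h => by_contra (h ∘ hP ∘ hQQ')⟩

theorem Finset.eq_of_mem_of_mem_of_dichotomy {ι : Type*} {Q Q' : Finset ι} {P : Prop} {a : ι}
    (h : (P → Q = Q') ∧ (¬ P → Disjoint Q Q')) (ha : a ∈ Q) (ha' : a ∈ Q') : Q = Q' :=
  (em P).elim h.1 fun hP => absurd ha' (Finset.disjoint_left.1 (h.2 hP) ha)

structure IsKrauszCover (G : SimpleGraph α) (𝒬 : Finset (Finset α)) (QE : Sym2 α → Finset α)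
    (QW : α → Finset α) : Prop where
  isClique : ∀ Q ∈ 𝒬, G.IsClique (Q : Set α)
  card_vertMembers_le : ∀ v : α, (vertMembers 𝒬 v).card ≤ 3
  card_edgeMembers : ∀ e ∈ G.edgeSet, 1 ≤ (edgeMembers 𝒬 e).card ∧ (edgeMembers 𝒬 e).card ≤ 2
  QE_spec : ∀ e ∈ G.edgeSet, (edgeMembers 𝒬 e).card = 2 → QE e ∈ 𝒬 ∧ ∀ x ∈ e, x ∈ QE e
  QW_spec : ∀ v : α, (vertMembers 𝒬 v).card = 3 → QW v ∈ 𝒬 ∧ v ∈ QW v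
  QE_QE : ∀ e ∈ G.edgeSet, (edgeMembers 𝒬 e).card = 2 →
    ∀ f ∈ G.edgeSet, (edgeMembers 𝒬 f).card = 2 →
      ((∀ x ∈ e, x ∈ QE f) → QE e = QE f) ∧ (¬ (∀ x ∈ e, x ∈ QE f) → Disjoint (QE e) (QE f))
  QE_QW : ∀ e ∈ G.edgeSet, (edgeMembers 𝒬 e).card = 2 →
    ∀ v : α, (vertMembers 𝒬 v).card = 3 →
      ((∀ x ∈ e, x ∈ QW v) → QE e = QW v) ∧ (¬ (∀ x ∈ e, x ∈ QW v) → Disjoint (QE e) (QW v))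
  QW_QE : ∀ v : α, (vertMembers 𝒬 v).card = 3 →
    ∀ e ∈ G.edgeSet, (edgeMembers 𝒬 e).card = 2 →
      ((v ∈ QE e) → QW v = QE e) ∧ ((v ∉ QE e) → Disjoint (QW v) (QE e))
  QW_QW : ∀ u : α, (vertMembers 𝒬 u).card = 3 →
    ∀ v : α, (vertMembers 𝒬 v).card = 3 →
      ((u ∈ QW v) → QW u = QW v) ∧ ((u ∉ QW v) → Disjoint (QW u) (QW v))

/-- `G ≅ CL(H)` where the vertex `a` of `G` is an edge of `H` joining the `ends a` (completed by
private vertices of `a` if there are fewer than two) and colored `color a`. -/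
structure ColorLineRep {ι : Type*} (G : SimpleGraph ι) (β γ : Type*) where
  ends : ι → Finset β
  color : ι → γ
  card_ends_le : ∀ a, (ends a).card ≤ 2
  eq_of_mem_ends : ∀ {a b x y}, x ≠ y → x ∈ ends a → y ∈ ends a → x ∈ ends b → y ∈ ends b → a = b
  adj_iff : ∀ a b, G.Adj a b ↔ a ≠ b ∧ (¬ Disjoint (ends a) (ends b) ∨ color a = color b)

namespace ColorLineRep

section Realization

variable {ι β γ : Type*} {G : SimpleGraph ι} (r : ColorLineRep G β γ)

noncomputable def edge (a : ι) : Sym2 (β ⊕ ι × Bool) :=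
  match (r.ends a).toList with
  | [x, y] => s(.inl x, .inl y)
  | [x] => s(.inl x, .inr (a, false))
  | _ => s(.inr (a, false), .inr (a, true))

theorem inl_mem_edge_iff {a : ι} {x : β} : .inl x ∈ r.edge a ↔ x ∈ r.ends a := by
  have hlen := r.card_ends_le a
  rw [← Finset.mem_toList, ← Finset.length_toList] at *
  unfold edge
  generalize (r.ends a).toList = l at *
  rcases l with _ | ⟨y, _ | ⟨z, _ | ⟨w, l⟩⟩⟩ <;> simp_all

theorem eq_of_inr_mem_edge {a b : ι} {i : Bool} (h : .inr (b, i) ∈ r.edge a) : b = a := by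
  unfold edge at h
  generalize (r.ends a).toList = l at h
  rcases l with _ | ⟨y, _ | ⟨z, _ | ⟨w, l⟩⟩⟩ <;> aesop

theorem not_isDiag_edge (a : ι) : ¬ (r.edge a).IsDiag := by
  have hnd := (r.ends a).nodup_toList
  unfold edge
  generalize (r.ends a).toList = l at *
  rcases l with _ | ⟨y, _ | ⟨z, _ | ⟨w, l⟩⟩⟩ <;> simp_all

theorem edge_injective : Function.Injective r.edge := by
  intro a b h
  have hinl : ∀ x, .inl x ∈ r.edge a → x ∈ r.ends a ∧ x ∈ r.ends b := fun x hx =>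
    ⟨r.inl_mem_edge_iff.1 hx, r.inl_mem_edge_iff.1 (h ▸ hx)⟩
  have hinr : ∀ i, .inr (a, i) ∈ r.edge a → a = b := fun i hi =>
    r.eq_of_inr_mem_edge (a := b) (h ▸ hi)
  have hnd := (r.ends a).nodup_toList
  unfold edge at hinl hinr
  generalize (r.ends a).toList = l at *
  rcases l with _ | ⟨x, _ | ⟨y, _ | ⟨z, l⟩⟩⟩
  case cons.cons.nil =>
    obtain ⟨hxa, hxb⟩ := hinl x (by simp)
    obtain ⟨hya, hyb⟩ := hinl y (by simp)
    exact r.eq_of_mem_ends (by simpa using hnd) hxa hya hxb hyb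
  all_goals simp_all

theorem exists_mem_edge_iff {a b : ι} (hab : a ≠ b) :
    (∃ v, v ∈ r.edge a ∧ v ∈ r.edge b) ↔ ¬ Disjoint (r.ends a) (r.ends b) := by
  rw [Finset.not_disjoint_iff]
  constructor
  · rintro ⟨x | ⟨c, i⟩, ha, hb⟩
    · exact ⟨x, r.inl_mem_edge_iff.1 ha, r.inl_mem_edge_iff.1 hb⟩
    · exact absurd ((r.eq_of_inr_mem_edge ha).symm.trans (r.eq_of_inr_mem_edge hb)) hab
  · rintro ⟨x, ha, hb⟩
    exact ⟨.inl x, r.inl_mem_edge_iff.2 ha, r.inl_mem_edge_iff.2 hb⟩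

end Realization

theorem isColorLineGraph {ι β γ : Type} [Fintype ι] [Fintype β] {G : SimpleGraph ι}
    (r : ColorLineRep G β γ) : IsColorLineGraph G := by
  let H : SimpleGraph (β ⊕ ι × Bool) := .fromEdgeSet (Set.range r.edge)
  have hH : H.edgeSet = Set.range r.edge := by
    rw [edgeSet_fromEdgeSet, sdiff_eq_left, Set.disjoint_left]
    rintro _ ⟨a, rfl⟩
    exact r.not_isDiag_edge a
  let e : ι ≃ H.edgeSet :=
    (Equiv.ofInjective r.edge r.edge_injective).trans (Equiv.setCongr hH.symm)
  refine ⟨_, γ, inferInstance, H, r.color ∘ e.symm, ⟨e, fun {a b} => ?_⟩⟩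
  change _ ∧ (_ ∨ r.color (e.symm (e a)) = r.color (e.symm (e b))) ↔ _
  rw [e.symm_apply_apply, e.symm_apply_apply, e.injective.ne_iff, r.adj_iff]
  exact and_congr_right fun hab => or_congr_left (r.exists_mem_edge_iff hab)

def ofIso {ι V C : Type*} {G : SimpleGraph ι} [DecidableEq V] {H : SimpleGraph V}
    {φ : H.edgeSet → C} (i : G ≃g colorLineGraph H φ) : ColorLineRep G V C where
  ends a := (i a : Sym2 V).toFinset
  color a := φ (i a)
  card_ends_le a := (Sym2.card_toFinset_of_not_isDiag _ (H.not_isDiag_of_mem_edgeSet (i a).2)).le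
  eq_of_mem_ends hxy hxa hya hxb hyb := i.injective <| Subtype.ext <| Sym2.eq_of_ne_mem hxy
    (Sym2.mem_toFinset.1 hxa) (Sym2.mem_toFinset.1 hya) (Sym2.mem_toFinset.1 hxb)
    (Sym2.mem_toFinset.1 hyb)
  adj_iff a b := by
    rw [← i.map_adj_iff]
    change i a ≠ i b ∧ _ ↔ _
    simp [i.injective.ne_iff, Finset.not_disjoint_iff, Sym2.mem_toFinset]

section Classes

variable {ι β γ : Type*} [Fintype ι] {G : SimpleGraph ι} (r : ColorLineRep G β γ)

open scoped Classical in
noncomputable def star (x : β) : Finset ι := {a | x ∈ r.ends a}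

open scoped Classical in
noncomputable def colorClass (a : ι) : Finset ι := {b | r.color b = r.color a}

variable {r}

@[simp] theorem mem_star {a : ι} {x : β} : a ∈ r.star x ↔ x ∈ r.ends a := by simp [star]

@[simp] theorem mem_colorClass {a b : ι} : b ∈ r.colorClass a ↔ r.color b = r.color a := by
  simp [colorClass]

theorem colorClass_eq_of_mem {a b : ι} (h : b ∈ r.colorClass a) :
    r.colorClass b = r.colorClass a := by
  ext c
  simp_all

theorem colorClass_eq_of_not_disjoint {a b : ι}
    (h : ¬ Disjoint (r.colorClass a) (r.colorClass b)) : r.colorClass a = r.colorClass b := by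
  obtain ⟨c, hca, hcb⟩ := Finset.not_disjoint_iff.1 h
  rw [← colorClass_eq_of_mem hca, colorClass_eq_of_mem hcb]

theorem star_eq_of_mem_ends {a b : ι} {x y : β} (hab : a ≠ b) (hxa : x ∈ r.ends a)
    (hxb : x ∈ r.ends b) (hya : y ∈ r.ends a) (hyb : y ∈ r.ends b) : r.star x = r.star y := by
  by_contra hne
  exact hab (r.eq_of_mem_ends (fun h => hne (congrArg _ h)) hxa hya hxb hyb)

theorem card_le_one_of_forall_eq_star {a b : ι} (hab : a ≠ b) {S : Finset (Finset ι)}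
    (hS : ∀ Q ∈ S, ∃ x, x ∈ r.ends a ∧ x ∈ r.ends b ∧ r.star x = Q) : S.card ≤ 1 := by
  refine Finset.card_le_one.2 fun Q hQ Q' hQ' => ?_
  obtain ⟨x, hxa, hxb, rfl⟩ := hS Q hQ
  obtain ⟨y, hya, hyb, rfl⟩ := hS Q' hQ'
  exact star_eq_of_mem_ends hab hxa hxb hya hyb

end Classes

variable {G : SimpleGraph α} {β γ : Type*} (r : ColorLineRep G β γ)

noncomputable def cliqueFamily : Finset (Finset α) :=
  Finset.univ.biUnion fun a => insert (r.colorClass a) ((r.ends a).image r.star)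

variable {r}

theorem mem_cliqueFamily {Q : Finset α} :
    Q ∈ r.cliqueFamily ↔ ∃ a, Q = r.colorClass a ∨ ∃ x ∈ r.ends a, r.star x = Q := by
  simp [cliqueFamily]

theorem colorClass_mem_cliqueFamily (a : α) : r.colorClass a ∈ r.cliqueFamily :=
  mem_cliqueFamily.2 ⟨a, .inl rfl⟩

theorem isClique_of_mem_cliqueFamily {Q : Finset α} (hQ : Q ∈ r.cliqueFamily) :
    G.IsClique (Q : Set α) := by
  intro a ha b hb hab
  rw [r.adj_iff]
  obtain ⟨c, rfl | ⟨x, -, rfl⟩⟩ := mem_cliqueFamily.1 hQ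
  · exact ⟨hab, .inr ((mem_colorClass.1 ha).trans (mem_colorClass.1 hb).symm)⟩
  · exact ⟨hab, .inl (Finset.not_disjoint_iff.2 ⟨x, mem_star.1 ha, mem_star.1 hb⟩)⟩

theorem vertMembers_cliqueFamily_subset (a : α) :
    vertMembers r.cliqueFamily a ⊆ insert (r.colorClass a) ((r.ends a).image r.star) := by
  intro Q hQ
  obtain ⟨hQ, haQ⟩ := mem_vertMembers.1 hQ
  obtain ⟨c, rfl | ⟨x, -, rfl⟩⟩ := mem_cliqueFamily.1 hQ
  · exact Finset.mem_insert.2 (.inl (colorClass_eq_of_mem haQ).symm)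
  · exact Finset.mem_insert_of_mem (Finset.mem_image_of_mem _ (mem_star.1 haQ))

theorem card_vertMembers_cliqueFamily_le (a : α) : (vertMembers r.cliqueFamily a).card ≤ 3 :=
  calc (vertMembers r.cliqueFamily a).card
      ≤ (insert (r.colorClass a) ((r.ends a).image r.star)).card :=
        Finset.card_le_card (vertMembers_cliqueFamily_subset a)
    _ ≤ ((r.ends a).image r.star).card + 1 := Finset.card_insert_le _ _
    _ ≤ 3 := by
      have := r.card_ends_le a
      have := (r.ends a).card_image_le (f := r.star)
      omega

theorem mem_edgeMembers_cliqueFamily {a b : α} {Q : Finset α}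
    (hQ : Q ∈ edgeMembers r.cliqueFamily s(a, b)) :
    (r.color a = r.color b ∧ Q = r.colorClass a) ∨
      ∃ x, x ∈ r.ends a ∧ x ∈ r.ends b ∧ r.star x = Q := by
  obtain ⟨hQ, haQ, hbQ⟩ := mem_edgeMembers_mk.1 hQ
  obtain ⟨c, rfl | ⟨x, -, rfl⟩⟩ := mem_cliqueFamily.1 hQ
  · exact .inl ⟨(mem_colorClass.1 haQ).trans (mem_colorClass.1 hbQ).symm,
      (colorClass_eq_of_mem haQ).symm⟩
  · exact .inr ⟨x, mem_star.1 haQ, mem_star.1 hbQ, rfl⟩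

theorem card_edgeMembers_cliqueFamily_le {a b : α} (hab : a ≠ b) :
    (edgeMembers r.cliqueFamily s(a, b)).card ≤ 2 := by
  have : ((edgeMembers r.cliqueFamily s(a, b)).erase (r.colorClass a)).card ≤ 1 :=
    card_le_one_of_forall_eq_star hab fun Q hQ => by
      obtain ⟨hne, hQ⟩ := Finset.mem_erase.1 hQ
      exact (mem_edgeMembers_cliqueFamily hQ).resolve_left fun h => hne h.2
  have := (edgeMembers r.cliqueFamily s(a, b)).pred_card_le_card_erase (a := r.colorClass a)
  omega

theorem color_eq_of_card_edgeMembers_cliqueFamily {a b : α} (hab : a ≠ b)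
    (h2 : (edgeMembers r.cliqueFamily s(a, b)).card = 2) : r.color a = r.color b := by
  by_contra hne
  have : (edgeMembers r.cliqueFamily s(a, b)).card ≤ 1 :=
    card_le_one_of_forall_eq_star hab fun Q hQ =>
      (mem_edgeMembers_cliqueFamily hQ).resolve_left fun h => hne h.1
  omega

theorem one_le_card_edgeMembers_cliqueFamily {a b : α} (hab : G.Adj a b) :
    1 ≤ (edgeMembers r.cliqueFamily s(a, b)).card := by
  rw [Nat.one_le_iff_ne_zero, Finset.card_ne_zero]
  obtain ⟨-, hends | hcolor⟩ := (r.adj_iff a b).1 hab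
  · obtain ⟨x, hxa, hxb⟩ := Finset.not_disjoint_iff.1 hends
    exact ⟨r.star x, mem_edgeMembers_mk.2
      ⟨mem_cliqueFamily.2 ⟨a, .inr ⟨x, hxa, rfl⟩⟩, mem_star.2 hxa, mem_star.2 hxb⟩⟩
  · exact ⟨r.colorClass a, mem_edgeMembers_mk.2
      ⟨colorClass_mem_cliqueFamily a, mem_colorClass.2 rfl, mem_colorClass.2 hcolor.symm⟩⟩

theorem isKrauszCover :
    IsKrauszCover G r.cliqueFamily (fun e => r.colorClass e.out.1) r.colorClass := by
  have hQE : ∀ e ∈ G.edgeSet, (edgeMembers r.cliqueFamily e).card = 2 →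
      r.colorClass e.out.1 ∈ r.cliqueFamily ∧ ∀ x ∈ e, x ∈ r.colorClass e.out.1 :=
    Sym2.ind fun a b hab h2 => by
      have hc := color_eq_of_card_edgeMembers_cliqueFamily (G.ne_of_adj hab) h2
      refine ⟨colorClass_mem_cliqueFamily _, Sym2.forall_mem_pair.2 ?_⟩
      rcases Sym2.mem_iff.1 (Sym2.out_fst_mem s(a, b)) with h | h <;> simp [h, hc]
  have hQW (v : α) : v ∈ r.colorClass v := mem_colorClass.2 rfl
  exact
  { isClique := fun _ => isClique_of_mem_cliqueFamily
    card_vertMembers_le := card_vertMembers_cliqueFamily_le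
    card_edgeMembers := Sym2.ind fun a b hab =>
      ⟨one_le_card_edgeMembers_cliqueFamily hab, card_edgeMembers_cliqueFamily_le (G.ne_of_adj hab)⟩
    QE_spec := hQE
    QW_spec := fun v _ => ⟨colorClass_mem_cliqueFamily v, hQW v⟩
    QE_QE := fun e he he2 _ _ _ => Finset.eq_and_disjoint_of_mem colorClass_eq_of_not_disjoint
      ((hQE e he he2).2 _ e.out_fst_mem) (· _ e.out_fst_mem) (· ▸ (hQE e he he2).2)
    QE_QW := fun e he he2 _ _ => Finset.eq_and_disjoint_of_mem colorClass_eq_of_not_disjoint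
      ((hQE e he he2).2 _ e.out_fst_mem) (· _ e.out_fst_mem) (· ▸ (hQE e he he2).2)
    QW_QE := fun v _ _ _ _ => Finset.eq_and_disjoint_of_mem colorClass_eq_of_not_disjoint
      (hQW v) id (· ▸ hQW v)
    QW_QW := fun u _ _ _ => Finset.eq_and_disjoint_of_mem colorClass_eq_of_not_disjoint
      (hQW u) id (· ▸ hQW u) }

end ColorLineRep

section OfKrauszCover

variable (G : SimpleGraph α) (𝒬 : Finset (Finset α)) (QE : Sym2 α → Finset α)
  (QW : α → Finset α)

/-- `Q = Q_x` for some `x ∈ F ∪ W`. -/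
def IsDesignated (Q : Finset α) : Prop :=
  (∃ e ∈ G.edgeSet, (edgeMembers 𝒬 e).card = 2 ∧ QE e = Q) ∨
    ∃ v, (vertMembers 𝒬 v).card = 3 ∧ QW v = Q

open scoped Classical in
noncomputable def undesignatedMembers (a : α) : Finset (Finset α) :=
  {Q ∈ vertMembers 𝒬 a | ¬ IsDesignated G 𝒬 QE QW Q}

open scoped Classical in
noncomputable def designatedColor (a : α) : Finset α ⊕ α :=
  if h : ∃ Q ∈ 𝒬, a ∈ Q ∧ IsDesignated G 𝒬 QE QW Q then .inl h.choose else .inr a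

variable {G 𝒬 QE QW}

theorem mem_undesignatedMembers {a : α} {Q : Finset α} :
    Q ∈ undesignatedMembers G 𝒬 QE QW a ↔ Q ∈ 𝒬 ∧ a ∈ Q ∧ ¬ IsDesignated G 𝒬 QE QW Q := by
  simp [undesignatedMembers, mem_vertMembers, and_assoc]

theorem undesignatedMembers_subset (a : α) :
    undesignatedMembers G 𝒬 QE QW a ⊆ vertMembers 𝒬 a := by
  unfold undesignatedMembers
  classical exact Finset.filter_subset _ _

namespace IsKrauszCover

variable (h : IsKrauszCover G 𝒬 QE QW)
include h

theorem adj_iff {a b : α} : G.Adj a b ↔ a ≠ b ∧ ∃ Q ∈ 𝒬, a ∈ Q ∧ b ∈ Q := by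
  refine ⟨fun hab => ⟨G.ne_of_adj hab, ?_⟩, fun ⟨hab, Q, hQ, ha, hb⟩ => h.isClique Q hQ ha hb hab⟩
  obtain ⟨Q, hQ⟩ := Finset.card_pos.1 (h.card_edgeMembers s(a, b) hab).1
  exact ⟨Q, mem_edgeMembers_mk.1 hQ⟩

theorem eq_of_isDesignated {a : α} {Q Q' : Finset α} (hQ : IsDesignated G 𝒬 QE QW Q)
    (hQ' : IsDesignated G 𝒬 QE QW Q') (ha : a ∈ Q) (ha' : a ∈ Q') : Q = Q' := by
  rcases hQ with ⟨e, he, he2, rfl⟩ | ⟨v, hv, rfl⟩ <;>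
    rcases hQ' with ⟨f, hf, hf2, rfl⟩ | ⟨u, hu, rfl⟩
  · exact Finset.eq_of_mem_of_mem_of_dichotomy (h.QE_QE e he he2 f hf hf2) ha ha'
  · exact Finset.eq_of_mem_of_mem_of_dichotomy (h.QE_QW e he he2 u hu) ha ha'
  · exact Finset.eq_of_mem_of_mem_of_dichotomy (h.QW_QE v hv f hf hf2) ha ha'
  · exact Finset.eq_of_mem_of_mem_of_dichotomy (h.QW_QW v hv u hu) ha ha'

theorem card_undesignatedMembers_le (a : α) : (undesignatedMembers G 𝒬 QE QW a).card ≤ 2 := by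
  by_cases h3 : (vertMembers 𝒬 a).card = 3
  · have hW : QW a ∈ vertMembers 𝒬 a := mem_vertMembers.2 (h.QW_spec a h3)
    have hsub : undesignatedMembers G 𝒬 QE QW a ⊆ (vertMembers 𝒬 a).erase (QW a) :=
      fun Q hQ => by
        obtain ⟨hQ, haQ, hQD⟩ := mem_undesignatedMembers.1 hQ
        exact Finset.mem_erase.2
          ⟨fun hQW => hQD (.inr ⟨a, h3, hQW.symm⟩), mem_vertMembers.2 ⟨hQ, haQ⟩⟩
    simpa [Finset.card_erase_of_mem hW, h3] using Finset.card_le_card hsub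
  · have : (undesignatedMembers G 𝒬 QE QW a).card ≤ (vertMembers 𝒬 a).card :=
      Finset.card_le_card (undesignatedMembers_subset a)
    have := h.card_vertMembers_le a
    omega

theorem eq_of_mem_undesignatedMembers {a b : α} {Q Q' : Finset α} (hne : Q ≠ Q')
    (hQa : Q ∈ undesignatedMembers G 𝒬 QE QW a) (hQ'a : Q' ∈ undesignatedMembers G 𝒬 QE QW a)
    (hQb : Q ∈ undesignatedMembers G 𝒬 QE QW b) (hQ'b : Q' ∈ undesignatedMembers G 𝒬 QE QW b) :
    a = b := by
  by_contra hab
  obtain ⟨hQ, haQ, hQD⟩ := mem_undesignatedMembers.1 hQa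
  obtain ⟨hQ', haQ', hQ'D⟩ := mem_undesignatedMembers.1 hQ'a
  obtain ⟨-, hbQ, -⟩ := mem_undesignatedMembers.1 hQb
  obtain ⟨-, hbQ', -⟩ := mem_undesignatedMembers.1 hQ'b
  have he : s(a, b) ∈ G.edgeSet := h.isClique Q hQ haQ hbQ hab
  have hsub : {Q, Q'} ⊆ edgeMembers 𝒬 s(a, b) := by
    simp [Finset.insert_subset_iff, mem_edgeMembers_mk, *]
  have hcard := (Finset.card_pair hne).symm.trans_le (Finset.card_le_card hsub)
  have h2 : (edgeMembers 𝒬 s(a, b)).card = 2 := le_antisymm (h.card_edgeMembers _ he).2 hcard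
  -- so `s(a, b) ∈ F`, and `Q_{ab}`, a designated member containing `a` and `b`, is `Q` or `Q'`
  have hpair : edgeMembers 𝒬 s(a, b) = {Q, Q'} :=
    (Finset.eq_of_subset_of_card_le hsub (h2.trans (Finset.card_pair hne).symm).le).symm
  have hQE : QE s(a, b) ∈ ({Q, Q'} : Finset (Finset α)) :=
    hpair ▸ mem_edgeMembers.2 (h.QE_spec _ he h2)
  have hD : IsDesignated G 𝒬 QE QW (QE s(a, b)) := .inl ⟨_, he, h2, rfl⟩
  rcases Finset.mem_insert.1 hQE with hQE | hQE
  · exact hQD (hQE ▸ hD)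
  · exact hQ'D (Finset.mem_singleton.1 hQE ▸ hD)

theorem designatedColor_eq_iff {a b : α} (hab : a ≠ b) :
    designatedColor G 𝒬 QE QW a = designatedColor G 𝒬 QE QW b ↔
      ∃ Q ∈ 𝒬, a ∈ Q ∧ b ∈ Q ∧ IsDesignated G 𝒬 QE QW Q := by
  unfold designatedColor
  constructor
  · intro hc
    split_ifs at hc with ha hb hb
    · obtain ⟨hQ, haQ, hD⟩ := ha.choose_spec
      exact ⟨_, hQ, haQ, Sum.inl.inj hc ▸ hb.choose_spec.2.1, hD⟩
    · exact absurd (Sum.inr.inj hc) hab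
  · rintro ⟨Q, hQ, haQ, hbQ, hD⟩
    have ha : ∃ Q ∈ 𝒬, a ∈ Q ∧ IsDesignated G 𝒬 QE QW Q := ⟨Q, hQ, haQ, hD⟩
    have hb : ∃ Q ∈ 𝒬, b ∈ Q ∧ IsDesignated G 𝒬 QE QW Q := ⟨Q, hQ, hbQ, hD⟩
    rw [dif_pos ha, dif_pos hb,
      h.eq_of_isDesignated ha.choose_spec.2.2 hD ha.choose_spec.2.1 haQ,
      h.eq_of_isDesignated hb.choose_spec.2.2 hD hb.choose_spec.2.1 hbQ]

end IsKrauszCover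

noncomputable def ColorLineRep.ofIsKrauszCover (h : IsKrauszCover G 𝒬 QE QW) :
    ColorLineRep G (Finset α) (Finset α ⊕ α) where
  ends := undesignatedMembers G 𝒬 QE QW
  color := designatedColor G 𝒬 QE QW
  card_ends_le := h.card_undesignatedMembers_le
  eq_of_mem_ends := h.eq_of_mem_undesignatedMembers
  adj_iff a b := by
    rw [h.adj_iff]
    refine and_congr_right fun hab => ?_
    rw [h.designatedColor_eq_iff hab, Finset.not_disjoint_iff]
    simp only [mem_undesignatedMembers]
    constructor
    · rintro ⟨Q, hQ, ha, hb⟩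
      by_cases hD : IsDesignated G 𝒬 QE QW Q
      · exact .inr ⟨Q, hQ, ha, hb, hD⟩
      · exact .inl ⟨Q, ⟨hQ, ha, hD⟩, hQ, hb, hD⟩
    · rintro (⟨Q, ⟨hQ, ha, -⟩, -, hb, -⟩ | ⟨Q, hQ, ha, hb, -⟩) <;> exact ⟨Q, hQ, ha, hb⟩

end OfKrauszCover

/-- Krausz-type characterization for color-line graphs. -/
theorem krausz_colorLine (G : SimpleGraph α) :
    IsColorLineGraph G ↔
      ∃ 𝒬 : Finset (Finset α),
        -- every member of 𝒬 is a clique of G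
        (∀ Q ∈ 𝒬, G.IsClique (Q : Set α)) ∧
        -- (a) every vertex in at most three members, every edge in at least one
        -- and at most two members
        (∀ v : α, (vertMembers 𝒬 v).card ≤ 3) ∧
        (∀ e ∈ G.edgeSet,
          1 ≤ (edgeMembers 𝒬 e).card ∧ (edgeMembers 𝒬 e).card ≤ 2) ∧
        -- (b) the maps e ↦ QE e (on F = edges in exactly two members) and
        -- v ↦ QW v (on W = vertices in exactly three members)
        ∃ (QE : Sym2 α → Finset α) (QW : α → Finset α),
          (∀ e ∈ G.edgeSet, (edgeMembers 𝒬 e).card = 2 →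
            QE e ∈ 𝒬 ∧ ∀ x ∈ e, x ∈ QE e) ∧
          (∀ v : α, (vertMembers 𝒬 v).card = 3 →
            QW v ∈ 𝒬 ∧ v ∈ QW v) ∧
          -- (b2) for x, y ∈ F ∪ W
          (∀ e ∈ G.edgeSet, (edgeMembers 𝒬 e).card = 2 →
            ∀ f ∈ G.edgeSet, (edgeMembers 𝒬 f).card = 2 →
              ((∀ x ∈ e, x ∈ QE f) → QE e = QE f) ∧
              (¬ (∀ x ∈ e, x ∈ QE f) → Disjoint (QE e) (QE f))) ∧
          (∀ e ∈ G.edgeSet, (edgeMembers 𝒬 e).card = 2 →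
            ∀ v : α, (vertMembers 𝒬 v).card = 3 →
              ((∀ x ∈ e, x ∈ QW v) → QE e = QW v) ∧
              (¬ (∀ x ∈ e, x ∈ QW v) → Disjoint (QE e) (QW v))) ∧
          (∀ v : α, (vertMembers 𝒬 v).card = 3 →
            ∀ e ∈ G.edgeSet, (edgeMembers 𝒬 e).card = 2 →
              ((v ∈ QE e) → QW v = QE e) ∧
              ((v ∉ QE e) → Disjoint (QW v) (QE e))) ∧
          (∀ u : α, (vertMembers 𝒬 u).card = 3 →
            ∀ v : α, (vertMembers 𝒬 v).card = 3 →
              ((u ∈ QW v) → QW u = QW v) ∧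
              ((u ∉ QW v) → Disjoint (QW u) (QW v))) := by
  classical
  constructor
  · rintro ⟨V, C, -, H, φ, ⟨i⟩⟩
    obtain ⟨h₁, h₂, h₃, h₄, h₅, h₆, h₇, h₈, h₉⟩ := (ColorLineRep.ofIso i).isKrauszCover
    exact ⟨_, h₁, h₂, h₃, _, _, h₄, h₅, h₆, h₇, h₈, h₉⟩
  · rintro ⟨𝒬, h₁, h₂, h₃, QE, QW, h₄, h₅, h₆, h₇, h₈, h₉⟩
    exact (ColorLineRep.ofIsKrauszCover ⟨h₁, h₂, h₃, h₄, h₅, h₆, h₇, h₈, h₉⟩).isColorLineGraph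
end

section
/- The graph K7 − e, obtained from the complete graph on 7 vertices by deleting one edge, is not a proper color-line graph. -/
open SimpleGraph

/-!
Let `o` and `z` be the edges of `H` that are not adjacent in `CL(H)`: they are disjoint and
coloured differently, while any other two edges meet or share a colour. One edge meets at most two
edges of a colour class, because these are pairwise disjoint; so each of the classes of `o` and `z`
has at most one further element. Every edge coloured unlike `o` and `z` meets both, hence joins an
end of `o` to an end of `z`, and there are at most four such edges. With seven edges at least three
of them exist; an edge `p ≠ o` coloured like `o` would avoid `o` and meet all of them, which forces
`p` to contain both ends of `z`, i.e. `p = z`. So the classes of `o` and `z` are singletons and the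
five remaining edges join `o` to `z`, one too many.
-/

open Finset

theorem Sym2.eq_or_eq_or_eq_of_mem {V : Type*} {e : Sym2 V} {a b c : V} (ha : a ∈ e) (hb : b ∈ e)
    (hc : c ∈ e) : a = b ∨ a = c ∨ b = c := by
  induction e using Sym2.ind with
  | _ x y =>
    rw [Sym2.mem_iff] at ha hb hc
    rcases ha with rfl | rfl <;> rcases hb with rfl | rfl <;> rcases hc with rfl | rfl <;> simp

theorem Sym2.eq_of_mem_of_mem {V : Type*} {e f : Sym2 V} (he : ¬ e.IsDiag) (h : ∀ v ∈ e, v ∈ f) :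
    e = f := by
  induction e using Sym2.ind with
  | _ u v =>
    have huv : u ≠ v := by simpa using he
    exact ((Sym2.mem_and_mem_iff huv).mp ⟨h u (Sym2.mem_mk_left u v),
      h v (Sym2.mem_mk_right u v)⟩).symm

def EdgesMeet {V : Type*} (e f : Sym2 V) : Prop := ∃ v, v ∈ e ∧ v ∈ f

namespace EdgesMeet

variable {V : Type*} {e f g h : Sym2 V}

theorem symm (hef : EdgesMeet e f) : EdgesMeet f e :=
  let ⟨v, hve, hvf⟩ := hef; ⟨v, hvf, hve⟩

theorem of_three (hf : EdgesMeet e f) (hg : EdgesMeet e g) (hh : EdgesMeet e h) :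
    EdgesMeet f g ∨ EdgesMeet f h ∨ EdgesMeet g h := by
  obtain ⟨a, hae, haf⟩ := hf
  obtain ⟨b, hbe, hbg⟩ := hg
  obtain ⟨c, hce, hch⟩ := hh
  rcases Sym2.eq_or_eq_or_eq_of_mem hae hbe hce with rfl | rfl | rfl
  · exact Or.inl ⟨a, haf, hbg⟩
  · exact Or.inr (Or.inl ⟨a, haf, hch⟩)
  · exact Or.inr (Or.inr ⟨b, hbg, hch⟩)

end EdgesMeet

theorem SimpleGraph.card_le_two_of_forall_mem_edgesMeet {V : Type*} {H : SimpleGraph V}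
    {e : Sym2 V} {w : V} (hw : w ∉ e) (T : Finset H.edgeSet)
    (hT : ∀ q ∈ T, w ∈ (q : Sym2 V) ∧ EdgesMeet (q : Sym2 V) e) : T.card ≤ 2 := by
  by_contra! h3
  obtain ⟨q₁, h₁, q₂, h₂, q₃, h₃, h₁₂, h₁₃, h₂₃⟩ := Finset.two_lt_card.mp h3
  have spoke : ∀ q ∈ T, ∃ a ∈ e, (q : Sym2 V) = s(w, a) := by
    intro q hq
    obtain ⟨hwq, a, haq, hae⟩ := hT q hq
    exact ⟨a, hae, (Sym2.mem_and_mem_iff fun h : w = a => hw (h ▸ hae)).mp ⟨hwq, haq⟩⟩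
  obtain ⟨a₁, ha₁, hq₁⟩ := spoke q₁ h₁
  obtain ⟨a₂, ha₂, hq₂⟩ := spoke q₂ h₂
  obtain ⟨a₃, ha₃, hq₃⟩ := spoke q₃ h₃
  rcases Sym2.eq_or_eq_or_eq_of_mem ha₁ ha₂ ha₃ with rfl | rfl | rfl
  · exact h₁₂ (Subtype.ext (hq₁.trans hq₂.symm))
  · exact h₁₃ (Subtype.ext (hq₁.trans hq₃.symm))
  · exact h₂₃ (Subtype.ext (hq₂.trans hq₃.symm))

theorem SimpleGraph.Iso.eq_top_deleteEdges {α β : Type*} {G : SimpleGraph β} {a b : α}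
    (ψ : (⊤ : SimpleGraph α).deleteEdges {s(a, b)} ≃g G) :
    G = (⊤ : SimpleGraph β).deleteEdges {s(ψ a, ψ b)} := by
  ext e f
  obtain ⟨e, rfl⟩ := ψ.surjective e
  obtain ⟨f, rfl⟩ := ψ.surjective f
  rw [ψ.map_adj_iff]
  simp [ψ.injective.eq_iff]

theorem Finset.card_univ_le_card_filter_ne_add {α β : Type*} [Fintype α] [DecidableEq β]
    (f : α → β) (b c : β) :
    Fintype.card α ≤ (univ.filter fun a => f a ≠ b ∧ f a ≠ c).card +
      (univ.filter fun a => f a = b).card + (univ.filter fun a => f a = c).card := by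
  classical
  have hcover : univ ⊆ (univ.filter fun a => f a ≠ b ∧ f a ≠ c) ∪
      (univ.filter fun a => f a = b) ∪ univ.filter fun a => f a = c := by
    intro a _
    simp only [mem_union, mem_filter, mem_univ, true_and]
    tauto
  rw [← card_univ]
  exact (card_le_card hcover).trans ((card_union_le _ _).trans
    (Nat.add_le_add_right (card_union_le _ _) _))

section ProperColorLine

variable {V C : Type*} {H : SimpleGraph V} {φ : H.edgeSet → C}

theorem IsProperEdgeColoring.not_edgesMeet (hφ : IsProperEdgeColoring H φ) {e f : H.edgeSet}
    (hef : e ≠ f) (hc : φ e = φ f) : ¬ EdgesMeet (e : Sym2 V) f :=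
  fun h => hφ e f hef h hc

namespace colorLineGraph

variable {o z : H.edgeSet}

theorem edgesMeet_of_color_ne
    (hK : colorLineGraph H φ = (⊤ : SimpleGraph H.edgeSet).deleteEdges {s(o, z)})
    {e f : H.edgeSet} (heo : e ≠ o) (hez : e ≠ z) (hc : φ e ≠ φ f) : EdgesMeet (e : Sym2 V) f := by
  have hadj : (colorLineGraph H φ).Adj e f := by
    rw [hK, deleteEdges_adj]
    exact ⟨fun h => hc (congrArg φ h), by simp [heo, hez]⟩
  exact hadj.2.resolve_right hc

theorem not_edgesMeet_and_color_ne
    (hK : colorLineGraph H φ = (⊤ : SimpleGraph H.edgeSet).deleteEdges {s(o, z)}) (hoz : o ≠ z) :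
    ¬ EdgesMeet (o : Sym2 V) z ∧ φ o ≠ φ z := by
  have hnadj : ¬ (colorLineGraph H φ).Adj o z := by simp [hK]
  exact not_or.mp fun h => hnadj ⟨hoz, h⟩

/-- Two further edges coloured like `o` would, together with `o` or with a fourth edge, form
three edges of one colour (hence pairwise disjoint) all met by a single edge. -/
theorem eq_of_ne_of_color_eq (hφ : IsProperEdgeColoring H φ) (hoz : o ≠ z)
    (hK : colorLineGraph H φ = (⊤ : SimpleGraph H.edgeSet).deleteEdges {s(o, z)})
    [Fintype H.edgeSet] (h5 : 4 < Fintype.card H.edgeSet) {i j : H.edgeSet}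
    (hio : i ≠ o) (hjo : j ≠ o) (hi : φ i = φ o) (hj : φ j = φ o) : i = j := by
  classical
  by_contra hij
  obtain ⟨-, hC⟩ := not_edgesMeet_and_color_ne hK hoz
  have hiz : i ≠ z := fun h => hC (h ▸ hi).symm
  have hjz : j ≠ z := fun h => hC (h ▸ hj).symm
  obtain ⟨k, -, hk⟩ := exists_mem_notMem_of_card_lt_card (s := {o, z, i, j}) (t := univ)
    (card_le_four.trans_lt h5)
  simp only [mem_insert, mem_singleton, not_or] at hk
  obtain ⟨hko, hkz, hki, hkj⟩ := hk
  have hij' := hφ.not_edgesMeet hij (hi.trans hj.symm)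
  by_cases hk : φ k = φ o
  · have hzk := (edgesMeet_of_color_ne hK hko hkz (hk ▸ hC)).symm
    have hzi := (edgesMeet_of_color_ne hK hio hiz (hi ▸ hC)).symm
    have hzj := (edgesMeet_of_color_ne hK hjo hjz (hj ▸ hC)).symm
    have hik := hφ.not_edgesMeet (Ne.symm hki) (hi.trans hk.symm)
    have hjk := hφ.not_edgesMeet (Ne.symm hkj) (hj.trans hk.symm)
    rcases hzi.of_three hzj hzk with h | h | h <;> contradiction
  · have hko' := edgesMeet_of_color_ne hK hko hkz hk
    have hki' := edgesMeet_of_color_ne hK hko hkz (hi ▸ hk)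
    have hkj' := edgesMeet_of_color_ne hK hko hkz (hj ▸ hk)
    have hoi := hφ.not_edgesMeet (Ne.symm hio) hi.symm
    have hoj := hφ.not_edgesMeet (Ne.symm hjo) hj.symm
    rcases hko'.of_three hki' hkj' with h | h | h <;> contradiction

theorem card_filter_color_eq_le_two [DecidableEq C] (hφ : IsProperEdgeColoring H φ) (hoz : o ≠ z)
    (hK : colorLineGraph H φ = (⊤ : SimpleGraph H.edgeSet).deleteEdges {s(o, z)})
    [Fintype H.edgeSet] (h5 : 4 < Fintype.card H.edgeSet) :
    (univ.filter fun e => φ e = φ o).card ≤ 2 := by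
  classical
  have hrest : ((univ.filter fun e => φ e = φ o).erase o).card ≤ 1 := by
    refine card_le_one.mpr fun i hi j hj => ?_
    simp only [mem_erase, mem_filter, mem_univ, true_and] at hi hj
    exact eq_of_ne_of_color_eq hφ hoz hK h5 hi.1 hj.1 hi.2 hj.2
  have := pred_card_le_card_erase (s := univ.filter fun e => φ e = φ o) (a := o)
  omega

theorem card_le_four_of_color_ne (hoz : o ≠ z)
    (hK : colorLineGraph H φ = (⊤ : SimpleGraph H.edgeSet).deleteEdges {s(o, z)})
    (T : Finset H.edgeSet) (hT : ∀ q ∈ T, φ q ≠ φ o ∧ φ q ≠ φ z) : T.card ≤ 4 := by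
  classical
  obtain ⟨hN, -⟩ := not_edgesMeet_and_color_ne hK hoz
  have hmeet : ∀ q ∈ T, EdgesMeet (q : Sym2 V) o ∧ EdgesMeet (q : Sym2 V) z := by
    intro q hq
    have hqo : q ≠ o := fun h => (hT q hq).1 (h ▸ rfl)
    have hqz : q ≠ z := fun h => (hT q hq).2 (h ▸ rfl)
    exact ⟨edgesMeet_of_color_ne hK hqo hqz (hT q hq).1,
      edgesMeet_of_color_ne hK hqo hqz (hT q hq).2⟩
  obtain ⟨u, v, huv⟩ := Sym2.exists.mp ⟨(z : Sym2 V), rfl⟩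
  have hend : ∀ w ∈ (z : Sym2 V), (T.filter fun q : H.edgeSet => w ∈ (q : Sym2 V)).card ≤ 2 :=
    fun w hw => H.card_le_two_of_forall_mem_edgesMeet (fun hwo => hN ⟨w, hwo, hw⟩) _
      fun q hq => ⟨(mem_filter.mp hq).2, (hmeet q (mem_filter.mp hq).1).1⟩
  have hcover : T ⊆ (T.filter fun q : H.edgeSet => u ∈ (q : Sym2 V)) ∪
      T.filter fun q : H.edgeSet => v ∈ (q : Sym2 V) := by
    intro q hq
    obtain ⟨w, hwq, hwz⟩ := (hmeet q hq).2
    rw [huv, Sym2.mem_iff] at hwz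
    rcases hwz with rfl | rfl <;> simp [hq, hwq]
  calc T.card ≤ _ := card_le_card hcover
    _ ≤ _ := card_union_le _ _
    _ ≤ 2 + 2 := add_le_add (hend u (huv.symm ▸ Sym2.mem_mk_left u v))
      (hend v (huv.symm ▸ Sym2.mem_mk_right u v))

theorem eq_of_color_eq_of_two_lt_card (hφ : IsProperEdgeColoring H φ) (hoz : o ≠ z)
    (hK : colorLineGraph H φ = (⊤ : SimpleGraph H.edgeSet).deleteEdges {s(o, z)})
    {T : Finset H.edgeSet} (hT : ∀ q ∈ T, φ q ≠ φ o ∧ φ q ≠ φ z) (h3 : 2 < T.card)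
    {p : H.edgeSet} (hp : φ p = φ o) : p = o := by
  by_contra hpo
  obtain ⟨hN, hC⟩ := not_edgesMeet_and_color_ne hK hoz
  have hpo' := hφ.not_edgesMeet hpo hp
  have hTo : ∀ q ∈ T, q ≠ o ∧ q ≠ z := fun q hq =>
    ⟨fun h => (hT q hq).1 (h ▸ rfl), fun h => (hT q hq).2 (h ▸ rfl)⟩
  have hend : ∀ {w w'}, (z : Sym2 V) = s(w, w') → w ∈ (p : Sym2 V) := by
    intro w w' hz
    by_contra hwp
    refine h3.not_ge (H.card_le_two_of_forall_mem_edgesMeet (e := o) (w := w') ?_ T fun q hq => ?_)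
    · exact fun hw'o => hN ⟨w', hw'o, hz ▸ Sym2.mem_mk_right w w'⟩
    obtain ⟨hqo, hqz⟩ := hTo q hq
    obtain ⟨a, haq, hao⟩ := edgesMeet_of_color_ne hK hqo hqz (hT q hq).1
    obtain ⟨c, hcq, hcz⟩ := edgesMeet_of_color_ne hK hqo hqz (hT q hq).2
    obtain ⟨b, hbq, hbp⟩ := edgesMeet_of_color_ne hK hqo hqz (hp ▸ (hT q hq).1)
    have hbc : b = c := by
      rcases Sym2.eq_or_eq_or_eq_of_mem haq hbq hcq with rfl | rfl | h
      · exact absurd ⟨a, hbp, hao⟩ hpo'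
      · exact absurd ⟨a, hao, hcz⟩ hN
      · exact h
    subst hbc
    rw [hz, Sym2.mem_iff] at hcz
    rcases hcz with rfl | rfl
    · exact absurd hbp hwp
    · exact ⟨hbq, a, haq, hao⟩
  have hpz : (z : Sym2 V) = p :=
    Sym2.eq_of_mem_of_mem (H.not_isDiag_of_mem_edgeSet z.2) fun w hw => by
      obtain ⟨w', hz⟩ := Sym2.mem_iff_exists.mp hw
      exact hend hz
  exact hC (hp ▸ congrArg φ (Subtype.ext hpz.symm))

theorem card_edgeSet_le_six (hφ : IsProperEdgeColoring H φ) (hoz : o ≠ z)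
    (hK : colorLineGraph H φ = (⊤ : SimpleGraph H.edgeSet).deleteEdges {s(o, z)})
    [Fintype H.edgeSet] : Fintype.card H.edgeSet ≤ 6 := by
  classical
  by_contra! h7
  have hK' : colorLineGraph H φ = (⊤ : SimpleGraph H.edgeSet).deleteEdges {s(z, o)} :=
    Sym2.eq_swap (a := o) ▸ hK
  have hn := card_univ_le_card_filter_ne_add φ (φ o) (φ z)
  set T := univ.filter fun q => φ q ≠ φ o ∧ φ q ≠ φ z
  have hT : ∀ q ∈ T, φ q ≠ φ o ∧ φ q ≠ φ z := fun q hq => (mem_filter.mp hq).2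
  have hT3 : 2 < T.card := by
    have := card_filter_color_eq_le_two hφ hoz hK (by omega)
    have := card_filter_color_eq_le_two hφ hoz.symm hK' (by omega)
    omega
  have hO : (univ.filter fun e => φ e = φ o).card ≤ 1 :=
    (card_le_card fun p hp => mem_singleton.mpr
      (eq_of_color_eq_of_two_lt_card hφ hoz hK hT hT3 (mem_filter.mp hp).2)).trans_eq
      (card_singleton o)
  have hZ : (univ.filter fun e => φ e = φ z).card ≤ 1 :=
    (card_le_card fun p hp => mem_singleton.mpr (eq_of_color_eq_of_two_lt_card hφ hoz.symm hK'
      (fun q hq => (hT q hq).symm) hT3 (mem_filter.mp hp).2)).trans_eq (card_singleton z)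
  have := card_le_four_of_color_ne hoz hK T hT
  omega

end colorLineGraph

end ProperColorLine

theorem not_isProperColorLineGraph_top_deleteEdges {α : Type*} [Fintype α] {a b : α} (hab : a ≠ b)
    (h7 : 7 ≤ Fintype.card α) :
    ¬ IsProperColorLineGraph ((⊤ : SimpleGraph α).deleteEdges {s(a, b)}) := by
  rintro ⟨V, C, _, H, φ, hφ, ⟨ψ⟩⟩
  let _ : Fintype H.edgeSet := Fintype.ofEquiv α ψ.toEquiv
  have h6 := colorLineGraph.card_edgeSet_le_six hφ (ψ.injective.ne hab) ψ.eq_top_deleteEdges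
  rw [← Fintype.card_congr ψ.toEquiv] at h6
  omega

/-- `K₇ − e` is not a proper color-line graph. -/
theorem K7_minus_e_not_properColorLine :
    ¬ IsProperColorLineGraph
        ((⊤ : SimpleGraph (Fin 7)).deleteEdges {s(0, 1)}) :=
  not_isProperColorLineGraph_top_deleteEdges (by decide) le_rfl
end

section
/- The star K_{1,4} (the complete bipartite graph with parts of sizes 1 and 4) is not a color-line graph; consequently, no color-line graph contains an induced subgraph isomorphic to K_{1,4}. -/
open SimpleGraph

/-!
The neighbors of an edge `c = xy` in `CL(H)` split into three cliques: the edges colored like `c`,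
the edges through `x`, and the edges through `y`. By pigeonhole, two of any four neighbors of `c`
lie in the same clique, so they are adjacent and the four do not span an independent set.
-/

open SimpleGraph

namespace ColorLineGraph

variable {V C : Type*} {H : SimpleGraph V} {φ : H.edgeSet → C}

lemma adj_of_color_eq {e f : H.edgeSet} (hne : e ≠ f) (h : φ e = φ f) :
    (colorLineGraph H φ).Adj e f :=
  ⟨hne, Or.inr h⟩

lemma adj_of_mem_of_mem {e f : H.edgeSet} {v : V} (hne : e ≠ f)
    (he : v ∈ (e : Sym2 V)) (hf : v ∈ (f : Sym2 V)) : (colorLineGraph H φ).Adj e f :=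
  ⟨hne, Or.inl ⟨v, he, hf⟩⟩

lemma color_eq_or_mem_or_mem_of_adj {c e : H.edgeSet} {x y : V}
    (hc : (c : Sym2 V) = s(x, y)) (h : (colorLineGraph H φ).Adj c e) :
    φ e = φ c ∨ x ∈ (e : Sym2 V) ∨ y ∈ (e : Sym2 V) := by
  obtain ⟨-, ⟨v, hvc, hve⟩ | hcol⟩ := h
  · rw [hc, Sym2.mem_iff] at hvc
    rcases hvc with rfl | rfl
    exacts [Or.inr (Or.inl hve), Or.inr (Or.inr hve)]
  · exact Or.inl hcol.symm

open Classical in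
/-- Which of the three cliques of neighbors of `c = s(x, y)` holds `e`: `0` for the color of `c`,
`1` for the edges through `x`, `2` for the remaining ones, which pass through `y`. -/
noncomputable def neighborClass (φ : H.edgeSet → C) (c : H.edgeSet) (x : V) (e : H.edgeSet) :
    Fin 3 :=
  if φ e = φ c then 0 else if x ∈ (e : Sym2 V) then 1 else 2

lemma adj_of_neighborClass_eq {c e f : H.edgeSet} {x y : V} (hc : (c : Sym2 V) = s(x, y))
    (he : (colorLineGraph H φ).Adj c e) (hf : (colorLineGraph H φ).Adj c f) (hne : e ≠ f)
    (hclass : neighborClass φ c x e = neighborClass φ c x f) :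
    (colorLineGraph H φ).Adj e f := by
  have he' := color_eq_or_mem_or_mem_of_adj hc he
  have hf' := color_eq_or_mem_or_mem_of_adj hc hf
  unfold neighborClass at hclass
  split_ifs at hclass <;> first
    | exact absurd hclass (by decide)
    | exact adj_of_color_eq hne (‹φ e = φ c›.trans ‹φ f = φ c›.symm)
    | exact adj_of_mem_of_mem (v := x) hne ‹_› ‹_›
    | exact adj_of_mem_of_mem (v := y) hne (by tauto) (by tauto)

theorem exists_adj_of_four_neighbors (c : H.edgeSet) (f : Fin 4 → H.edgeSet)
    (hf : Function.Injective f) (hadj : ∀ i, (colorLineGraph H φ).Adj c (f i)) :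
    ∃ i j, i ≠ j ∧ (colorLineGraph H φ).Adj (f i) (f j) := by
  obtain ⟨⟨x, y⟩, hc⟩ := Quot.exists_rep (c : Sym2 V)
  obtain ⟨i, j, hij, hclass⟩ :=
    Fintype.exists_ne_map_eq_of_card_lt (neighborClass φ c x ∘ f) (by simp)
  exact ⟨i, j, hij, adj_of_neighborClass_eq hc.symm (hadj i) (hadj j) (hf.ne hij) hclass⟩

theorem isEmpty_completeBipartiteGraph_embedding (H : SimpleGraph V) (φ : H.edgeSet → C) :
    IsEmpty (completeBipartiteGraph (Fin 1) (Fin 4) ↪g colorLineGraph H φ) := by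
  refine ⟨fun m => ?_⟩
  obtain ⟨i, j, hij, hadj⟩ := exists_adj_of_four_neighbors (m (.inl 0)) (m ∘ .inr)
    (m.injective.comp Sum.inr_injective) (fun i => m.map_adj_iff.mpr (by simp))
  simpa [hij] using m.map_adj_iff.mp hadj

end ColorLineGraph

theorem IsColorLineGraph.isEmpty_completeBipartiteGraph_embedding {α : Type*}
    {G : SimpleGraph α} (hG : IsColorLineGraph G) :
    IsEmpty (completeBipartiteGraph (Fin 1) (Fin 4) ↪g G) := by
  obtain ⟨V, C, _, H, φ, ⟨e⟩⟩ := hG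
  have := ColorLineGraph.isEmpty_completeBipartiteGraph_embedding H φ
  exact ⟨fun m => isEmptyElim (m.trans e.toEmbedding)⟩

/-- The star `K_{1,4}` is not a color-line graph; consequently no color-line graph
contains an induced subgraph isomorphic to `K_{1,4}`. -/
theorem K14_not_colorLine :
    ¬ IsColorLineGraph (completeBipartiteGraph (Fin 1) (Fin 4)) ∧
    ∀ {α : Type} (G : SimpleGraph α), IsColorLineGraph G →
      ¬ ∃ s : Set α,
          Nonempty ((G.induce s) ≃g completeBipartiteGraph (Fin 1) (Fin 4)) := by
  refine ⟨fun hK => ?_, fun G hG ⟨s, ⟨e⟩⟩ => ?_⟩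
  · exact hK.isEmpty_completeBipartiteGraph_embedding.false Embedding.refl
  · exact hG.isEmpty_completeBipartiteGraph_embedding.false
      (e.symm.toEmbedding.trans (Embedding.induce s))
end

section
/- The complement of 6K2 (i.e., the complement of a perfect matching on 12 vertices, equivalently the graph on 12 vertices v_1,…,v_6,w_1,…,w_6 in which every pair of distinct vertices is adjacent except the pairs {v_i, w_i}) is not a color-line graph. -/
open SimpleGraph

/-- The perfect matching `6K₂` on 12 vertices `v₁,…,v₆,w₁,…,w₆`,
with edges `vᵢwᵢ`. -/
def sixK2 : SimpleGraph (Fin 6 ⊕ Fin 6) where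
  Adj u v := ∃ i : Fin 6,
    (u = Sum.inl i ∧ v = Sum.inr i) ∨ (u = Sum.inr i ∧ v = Sum.inl i)
  symm := by
    constructor
    rintro u v ⟨i, h | h⟩
    · exact ⟨i, Or.inr ⟨h.2, h.1⟩⟩
    · exact ⟨i, Or.inl ⟨h.2, h.1⟩⟩
  loopless := by
    constructor
    rintro u ⟨i, ⟨h1, h2⟩ | ⟨h1, h2⟩⟩ <;> rw [h1] at h2 <;> simp at h2

/-!
In a realization `CL(H) ≅ (6K₂)ᶜ` the 12 edges of `H` come in six partner pairs of disjoint,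
differently colored edges, and any two non-partner edges meet or share a color.
At most four edges meet both of two disjoint edges `r`, `r'`, and four such edges form a 4-cycle
with diagonals `r`, `r'`. Playing this against the pairing shows that a color class has at most 3
edges. So an edge `xy` has at least 8 of its 10 neighbours in `CL(H)` through `x` or `y`, i.e.
`deg x + deg y ≥ 10`; as a vertex meets at most one edge of each pair, `deg ≤ 6`, so every
non-isolated vertex has degree at least 4. The degree sum is 24, so there are at most 6
non-isolated vertices, and 12 edges need at least 6; hence all degrees are 4, contradicting
`deg x + deg y ≥ 10`.
-/

open Finset

namespace Sym2

variable {V : Type*}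

def Meets (e f : Sym2 V) : Prop := ∃ v, v ∈ e ∧ v ∈ f

theorem Meets.symm {e f : Sym2 V} (h : e.Meets f) : f.Meets e :=
  let ⟨v, he, hf⟩ := h
  ⟨v, hf, he⟩

variable [DecidableEq V]

theorem mem_cross_of_meets {x₁ x₂ y₁ y₂ : V} (h : ¬ s(x₁, x₂).Meets s(y₁, y₂)) {e : Sym2 V}
    (h₁ : e.Meets s(x₁, x₂)) (h₂ : e.Meets s(y₁, y₂)) :
    e ∈ ({s(x₁, y₁), s(x₁, y₂), s(x₂, y₁), s(x₂, y₂)} : Finset (Sym2 V)) := by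
  obtain ⟨x, hxe, hx⟩ := h₁
  obtain ⟨y, hye, hy⟩ := h₂
  have hxy : x ≠ y := by
    rintro rfl
    exact h ⟨x, hx, hy⟩
  rw [(mem_and_mem_iff hxy).1 ⟨hxe, hye⟩]
  rw [mem_iff] at hx hy
  rcases hx with rfl | rfl <;> rcases hy with rfl | rfl <;> simp

theorem card_le_four_of_forall_meets {r r' : Sym2 V} (h : ¬ r.Meets r') {T : Finset (Sym2 V)}
    (hT : ∀ e ∈ T, e.Meets r ∧ e.Meets r') : #T ≤ 4 := by
  induction r, r' using Sym2.inductionOn₂ with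
  | hf x₁ x₂ y₁ y₂ =>
    exact (card_le_card fun e he ↦ mem_cross_of_meets h (hT e he).1 (hT e he).2).trans card_le_four

/-- Four edges meeting both of two disjoint edges `r`, `r'` form a 4-cycle with diagonals `r`
and `r'`; `a` and `d` are two opposite edges of that cycle. -/
theorem exists_opposite_of_forall_meets {r r' : Sym2 V} (hr : ¬ r.IsDiag) (hr' : ¬ r'.IsDiag)
    (h : ¬ r.Meets r') {T : Finset (Sym2 V)} (hT : ∀ e ∈ T, e.Meets r ∧ e.Meets r')
    (h4 : 4 ≤ #T) :
    ∃ a ∈ T, ∃ d ∈ T, ∀ e, e.Meets a → e.Meets d → e = r ∨ e = r' ∨ e ∈ T := by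
  induction r, r' using Sym2.inductionOn₂ with
  | hf x₁ x₂ y₁ y₂ =>
    have hT' : T = {s(x₁, y₁), s(x₁, y₂), s(x₂, y₁), s(x₂, y₂)} :=
      eq_of_subset_of_card_le (fun e he ↦ mem_cross_of_meets h (hT e he).1 (hT e he).2)
        (card_le_four.trans h4)
    have hopp : ¬ s(x₁, y₁).Meets s(x₂, y₂) := by
      rintro ⟨v, h₁, h₂⟩
      simp only [mk_isDiag_iff, mem_iff] at hr hr' h₁ h₂
      exact h ⟨v, by grind, by grind⟩
    refine ⟨s(x₁, y₁), by simp [hT'], s(x₂, y₂), by simp [hT'], fun e h₁ h₂ ↦ ?_⟩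
    have := mem_cross_of_meets hopp h₁ h₂
    simp only [hT', mem_insert, mem_singleton] at this ⊢
    rw [eq_swap (a := y₁)] at this
    tauto

end Sym2

section Involution

variable {ι : Type*} [Fintype ι] [DecidableEq ι] {σ : ι → ι}

theorem two_mul_card_le_of_forall_notMem (hσ : Function.Involutive σ) {S : Finset ι}
    (hS : ∀ i ∈ S, σ i ∉ S) : 2 * #S ≤ Fintype.card ι := by
  have hdisj : Disjoint S (S.image σ) := by
    rw [Finset.disjoint_left]
    rintro _ hi hi'
    obtain ⟨j, hj, rfl⟩ := mem_image.1 hi'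
    exact hS j hj hi
  calc 2 * #S = #(S ∪ S.image σ) := by
        rw [card_union_of_disjoint hdisj, card_image_of_injective _ hσ.injective, two_mul]
    _ ≤ Fintype.card ι := card_le_univ _

theorem exists_notMem_and_notMem (hσ : Function.Involutive σ) {S : Finset ι}
    (h : 2 * #S < Fintype.card ι) : ∃ i, i ∉ S ∧ σ i ∉ S := by
  by_contra! hS
  have hcover : univ ⊆ S ∪ S.image σ := fun i _ ↦ by
    by_cases hi : i ∈ S
    · exact mem_union_left _ hi
    · exact mem_union_right _ (mem_image.2 ⟨σ i, hS i hi, hσ i⟩)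
  have := (card_le_card hcover).trans (card_union_le _ _)
  rw [card_univ] at this
  have := card_image_le (s := S) (f := σ)
  omega

end Involution

/-- `CL` of the colored edges `edge i` is the complement of the perfect matching `{i, partner i}`
on `ι`. -/
structure CoMatchingRealization (ι V C : Type*) where
  edge : ι → Sym2 V
  color : ι → C
  partner : ι → ι
  edge_injective : Function.Injective edge
  not_isDiag : ∀ i, ¬ (edge i).IsDiag
  partner_involutive : Function.Involutive partner
  not_meets_partner : ∀ i, ¬ (edge i).Meets (edge (partner i))
  color_partner_ne : ∀ i, color i ≠ color (partner i)
  meets_or_color_eq : ∀ i j, i ≠ j → j ≠ partner i → (edge i).Meets (edge j) ∨ color i = color j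

namespace CoMatchingRealization

variable {ι V C : Type*} (M : CoMatchingRealization ι V C)

theorem meets_of_color_ne {i j : ι} (hc : M.color i ≠ M.color j) (hj : j ≠ M.partner i) :
    (M.edge i).Meets (M.edge j) :=
  (M.meets_or_color_eq i j (fun h ↦ hc (h ▸ rfl)) hj).resolve_right hc

theorem card_le_four_of_forall_meets {r r' : ι} (h : ¬ (M.edge r).Meets (M.edge r'))
    {S : Finset ι} (hS : ∀ q ∈ S, (M.edge q).Meets (M.edge r) ∧ (M.edge q).Meets (M.edge r')) :
    #S ≤ 4 := by
  classical
  rw [← card_image_of_injective S M.edge_injective]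
  refine Sym2.card_le_four_of_forall_meets h fun e he ↦ ?_
  obtain ⟨q, hq, rfl⟩ := mem_image.1 he
  exact hS q hq

theorem exists_opposite_of_forall_meets {r r' : ι} (h : ¬ (M.edge r).Meets (M.edge r'))
    {S : Finset ι} (hS : ∀ q ∈ S, (M.edge q).Meets (M.edge r) ∧ (M.edge q).Meets (M.edge r'))
    (h4 : 4 ≤ #S) :
    ∃ a ∈ S, ∃ d ∈ S, ∀ j, (M.edge j).Meets (M.edge a) → (M.edge j).Meets (M.edge d) →
      j = r ∨ j = r' ∨ j ∈ S := by
  classical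
  obtain ⟨_, ha', _, hd', hcycle⟩ := Sym2.exists_opposite_of_forall_meets (M.not_isDiag r)
    (M.not_isDiag r') h (T := S.image M.edge)
    (fun e he ↦ by obtain ⟨q, hq, rfl⟩ := mem_image.1 he; exact hS q hq)
    (by rwa [card_image_of_injective _ M.edge_injective])
  obtain ⟨a, ha, rfl⟩ := mem_image.1 ha'
  obtain ⟨d, hd, rfl⟩ := mem_image.1 hd'
  refine ⟨a, ha, d, hd, fun j hja hjd ↦ ?_⟩
  rcases hcycle _ hja hjd with h | h | h
  · exact .inl (M.edge_injective h)
  · exact .inr (.inl (M.edge_injective h))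
  · obtain ⟨q, hq, hqj⟩ := mem_image.1 h
    exact .inr (.inr (M.edge_injective hqj ▸ hq))

variable [Fintype ι]

def star [DecidableEq V] (w : V) : Finset ι := {i | w ∈ M.edge i}

def vertices [DecidableEq V] : Finset V := univ.biUnion fun i ↦ (M.edge i).toFinset

def colorClass [DecidableEq C] (γ : C) : Finset ι := {i | M.color i = γ}

variable {M}

@[simp]
theorem mem_star [DecidableEq V] {w : V} {i : ι} : i ∈ M.star w ↔ w ∈ M.edge i := by
  simp [star]

@[simp]
theorem mem_colorClass [DecidableEq C] {γ : C} {i : ι} : i ∈ M.colorClass γ ↔ M.color i = γ := by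
  simp [colorClass]

variable (M)

section Vertices

variable [DecidableEq V]

theorem sum_card_star : ∑ w ∈ M.vertices, #(M.star w) = 2 * Fintype.card ι := by
  have hbelow : ∀ i, M.vertices.bipartiteBelow (fun w i ↦ w ∈ M.edge i) i = (M.edge i).toFinset :=
    fun i ↦ by
      ext w
      simp only [bipartiteBelow, mem_filter, Sym2.mem_toFinset, vertices, mem_biUnion]
      exact ⟨And.right, fun hw ↦ ⟨⟨i, mem_univ _, hw⟩, hw⟩⟩
  calc ∑ w ∈ M.vertices, #(M.star w)
      = ∑ i, #(M.vertices.bipartiteBelow (fun w i ↦ w ∈ M.edge i) i) :=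
        sum_card_bipartiteAbove_eq_sum_card_bipartiteBelow _
    _ = 2 * Fintype.card ι := by
        simp [hbelow, Sym2.card_toFinset_of_not_isDiag _ (M.not_isDiag _), mul_comm]

theorem card_le_choose_two : Fintype.card ι ≤ (#M.vertices).choose 2 := by
  rw [← Sym2.card_image_offDiag, ← card_univ]
  refine card_le_card_of_injOn M.edge (fun i _ ↦ ?_) M.edge_injective.injOn
  have hmem : ∀ x ∈ M.edge i, x ∈ M.vertices := fun x hx ↦
    mem_biUnion.2 ⟨i, mem_univ _, Sym2.mem_toFinset.2 hx⟩
  have hdiag := M.not_isDiag i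
  generalize M.edge i = e at hmem hdiag ⊢
  induction e using Sym2.ind with
  | h x y =>
    rw [Sym2.mk_isDiag_iff] at hdiag
    exact mem_image.2 ⟨(x, y), mem_offDiag.2 ⟨hmem x (Sym2.mem_mk_left x y),
      hmem y (Sym2.mem_mk_right x y), hdiag⟩, rfl⟩

theorem two_mul_card_star_le [DecidableEq ι] (w : V) : 2 * #(M.star w) ≤ Fintype.card ι :=
  two_mul_card_le_of_forall_notMem M.partner_involutive fun i hi hi' ↦
    M.not_meets_partner i ⟨w, mem_star.1 hi, mem_star.1 hi'⟩

end Vertices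

variable [DecidableEq C] {γ : C}

theorem meets_of_mem_colorClass {q i : ι} (hq : q ∈ M.colorClass γ) (hi : i ∉ M.colorClass γ)
    (hqi : i ≠ M.partner q) : (M.edge q).Meets (M.edge i) :=
  M.meets_of_color_ne (fun h ↦ hi (mem_colorClass.2 (h.symm.trans (mem_colorClass.1 hq)))) hqi

theorem meets_pair_of_notMem_colorClass {q i : ι} (hq : q ∈ M.colorClass γ)
    (hi : i ∉ M.colorClass γ) (hi' : M.partner i ∉ M.colorClass γ) :
    (M.edge q).Meets (M.edge i) ∧ (M.edge q).Meets (M.edge (M.partner i)) :=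
  ⟨M.meets_of_mem_colorClass hq hi fun h ↦ hi' (by rwa [h, M.partner_involutive]),
    M.meets_of_mem_colorClass hq hi' fun h ↦ hi (M.partner_involutive.injective h ▸ hq)⟩

theorem card_colorClass_le_four {i : ι} (hi : i ∉ M.colorClass γ)
    (hi' : M.partner i ∉ M.colorClass γ) : #(M.colorClass γ) ≤ 4 :=
  M.card_le_four_of_forall_meets (M.not_meets_partner i) fun _ hq ↦
    M.meets_pair_of_notMem_colorClass hq hi hi'

theorem card_colorClass_lt_four {i j : ι} (hi : i ∉ M.colorClass γ)
    (hi' : M.partner i ∉ M.colorClass γ) (hj : j ∉ M.colorClass γ)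
    (hj' : M.partner j ∉ M.colorClass γ) (hji : j ≠ i) (hji' : j ≠ M.partner i) :
    #(M.colorClass γ) < 4 := by
  by_contra! h4
  obtain ⟨a, ha, d, hd, hcycle⟩ := M.exists_opposite_of_forall_meets (M.not_meets_partner i)
    (fun _ hq ↦ M.meets_pair_of_notMem_colorClass hq hi hi') h4
  rcases hcycle j (M.meets_pair_of_notMem_colorClass ha hj hj').1.symm
    (M.meets_pair_of_notMem_colorClass hd hj hj').1.symm with h | h | h
  exacts [hji h, hji' h, hj h]

variable [DecidableEq ι]

theorem two_mul_card_colorClass_le (γ : C) : 2 * #(M.colorClass γ) ≤ Fintype.card ι :=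
  two_mul_card_le_of_forall_notMem M.partner_involutive fun i hi hi' ↦
    M.color_partner_ne i ((mem_colorClass.1 hi).trans (mem_colorClass.1 hi').symm)

/-- Otherwise, for `u` in the class, the other five edges of the complement would all meet the
disjoint edges `u` and `partner u`. -/
theorem exists_not_meets_of_notMem_colorClass (hQ : (M.colorClass γ).Nonempty)
    (hcompl : 6 ≤ #(M.colorClass γ)ᶜ) :
    ∃ r ∉ M.colorClass γ, ∃ r' ∉ M.colorClass γ, ¬ (M.edge r).Meets (M.edge r') := by
  by_contra! hmeets
  obtain ⟨u, hu⟩ := hQ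
  have ht : M.partner u ∉ M.colorClass γ := fun ht ↦
    M.color_partner_ne u ((mem_colorClass.1 hu).trans (mem_colorClass.1 ht).symm)
  have h4 := M.card_le_four_of_forall_meets (M.not_meets_partner u)
    (S := (M.colorClass γ)ᶜ.erase (M.partner u)) fun s hs ↦ by
      obtain ⟨hsu, hs⟩ := mem_erase.1 hs
      exact ⟨(M.meets_of_mem_colorClass hu (mem_compl.1 hs) hsu).symm,
        hmeets s (mem_compl.1 hs) _ ht⟩
  rw [card_erase_of_mem (mem_compl.2 ht)] at h4
  omega

/-- If the class and its complement have six edges each, the complement contains two disjoint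
edges `r`, `r'`; four edges of the class meet both, and one more edge of the complement is
forced into the resulting 4-cycle. -/
theorem card_colorClass_lt_six (hcompl : 6 ≤ #(M.colorClass γ)ᶜ) : #(M.colorClass γ) < 6 := by
  by_contra! h6
  obtain ⟨r, hr, r', hr', hrr'⟩ :=
    M.exists_not_meets_of_notMem_colorClass (card_pos.1 (by omega)) hcompl
  have hmeets : ∀ q ∈ M.colorClass γ \ {M.partner r, M.partner r'},
      (M.edge q).Meets (M.edge r) ∧ (M.edge q).Meets (M.edge r') := by
    intro q hq
    simp only [mem_sdiff, mem_insert, mem_singleton, not_or] at hq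
    obtain ⟨hq, hqr, hqr'⟩ := hq
    refine ⟨M.meets_of_mem_colorClass hq hr ?_, M.meets_of_mem_colorClass hq hr' ?_⟩ <;>
      rintro rfl <;> simp [M.partner_involutive _] at hqr hqr'
  obtain ⟨a, ha, d, hd, hcycle⟩ := M.exists_opposite_of_forall_meets hrr' hmeets (by
    have := le_card_sdiff {M.partner r, M.partner r'} (M.colorClass γ)
    have : #({M.partner r, M.partner r'} : Finset ι) ≤ 2 := card_le_two
    omega)
  obtain ⟨s, hs⟩ : ((M.colorClass γ)ᶜ \ {r, r', M.partner a, M.partner d}).Nonempty := by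
    rw [← card_pos]
    have := le_card_sdiff {r, r', M.partner a, M.partner d} (M.colorClass γ)ᶜ
    have : #({r, r', M.partner a, M.partner d} : Finset ι) ≤ 4 := card_le_four
    omega
  simp only [mem_sdiff, mem_compl, mem_insert, mem_singleton, not_or] at hs
  obtain ⟨hs, hsr, hsr', hsa, hsd⟩ := hs
  have hQ : M.colorClass γ \ {M.partner r, M.partner r'} ⊆ M.colorClass γ := sdiff_subset
  rcases hcycle s (M.meets_of_mem_colorClass (hQ ha) hs hsa).symm
    (M.meets_of_mem_colorClass (hQ hd) hs hsd).symm with h | h | h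
  exacts [hsr h, hsr' h, hs (hQ h)]

theorem card_colorClass_le_three (hcard : Fintype.card ι = 12) (γ : C) :
    #(M.colorClass γ) ≤ 3 := by
  have hle := M.two_mul_card_colorClass_le γ
  have hlt : #(M.colorClass γ) < 6 := M.card_colorClass_lt_six (by rw [card_compl]; omega)
  obtain ⟨i, hi, hi'⟩ := exists_notMem_and_notMem M.partner_involutive
    (S := M.colorClass γ) (by omega)
  have h4 := M.card_colorClass_le_four hi hi'
  obtain ⟨j, hj, hj'⟩ := exists_notMem_and_notMem M.partner_involutive
    (S := insert i (M.colorClass γ)) (by have := card_insert_le i (M.colorClass γ); omega)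
  rw [mem_insert, not_or] at hj hj'
  have hji' : j ≠ M.partner i := by
    rintro rfl
    exact hj'.1 (M.partner_involutive i)
  exact Nat.lt_succ_iff.1 (M.card_colorClass_lt_four hi hi' hj.2 hj'.2 hj.1 hji')

variable [DecidableEq V]

/-- Every edge `j ≠ partner i` is `i` itself or a neighbour of `i` in the color-line graph. -/
theorem card_add_one_le {i : ι} {x y : V} (hi : M.edge i = s(x, y)) :
    Fintype.card ι + 1 ≤ #(M.star x) + #(M.star y) + #(M.colorClass (M.color i)) := by
  have hcover : univ.erase (M.partner i) ⊆ M.star x ∪ M.star y ∪ M.colorClass (M.color i) := by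
    intro j hj
    simp only [mem_union, mem_star, mem_colorClass]
    by_cases hij : i = j
    · subst hij
      simp
    rcases M.meets_or_color_eq i j hij (ne_of_mem_erase hj) with ⟨v, hvi, hvj⟩ | hc
    · rw [hi, Sym2.mem_iff] at hvi
      rcases hvi with rfl | rfl <;> simp [hvj]
    · exact Or.inr hc.symm
  have hx : i ∈ M.star x := mem_star.2 (hi ▸ Sym2.mem_mk_left x y)
  have hy : i ∈ M.star y := mem_star.2 (hi ▸ Sym2.mem_mk_right x y)
  have hc : i ∈ M.colorClass (M.color i) := mem_colorClass.2 rfl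
  have h₁ := card_union_add_card_inter (M.star x) (M.star y)
  have h₂ := card_union_add_card_inter (M.star x ∪ M.star y) (M.colorClass (M.color i))
  have h₃ : 0 < #(M.star x ∩ M.star y) := card_pos.2 ⟨i, mem_inter.2 ⟨hx, hy⟩⟩
  have h₄ : 0 < #((M.star x ∪ M.star y) ∩ M.colorClass (M.color i)) :=
    card_pos.2 ⟨i, mem_inter.2 ⟨mem_union_left _ hx, hc⟩⟩
  have h₅ := card_le_card hcover
  rw [card_erase_of_mem (mem_univ _), card_univ] at h₅
  have : 0 < Fintype.card ι := Fintype.card_pos_iff.2 ⟨i⟩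
  omega

theorem ten_le_card_star_add_card_star (hcard : Fintype.card ι = 12) {i : ι} {x y : V}
    (hi : M.edge i = s(x, y)) : 10 ≤ #(M.star x) + #(M.star y) := by
  have := M.card_add_one_le hi
  have := M.card_colorClass_le_three hcard (M.color i)
  omega

theorem four_le_card_star (hcard : Fintype.card ι = 12) {w : V} (hw : w ∈ M.vertices) :
    4 ≤ #(M.star w) := by
  obtain ⟨i, -, hw⟩ := mem_biUnion.1 hw
  obtain ⟨x, y, hi⟩ : ∃ x y, M.edge i = s(x, y) := ⟨_, _, (Quot.out_eq (M.edge i)).symm⟩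
  have := M.ten_le_card_star_add_card_star hcard hi
  have := M.two_mul_card_star_le x
  have := M.two_mul_card_star_le y
  rw [hi, Sym2.mem_toFinset, Sym2.mem_iff] at hw
  rcases hw with rfl | rfl <;> omega

end CoMatchingRealization

theorem CoMatchingRealization.card_ne_twelve {ι V C : Type*} [Fintype ι]
    (M : CoMatchingRealization ι V C) : Fintype.card ι ≠ 12 := by
  classical
  intro hcard
  have h6 : 6 ≤ #M.vertices := by
    by_contra! h
    have := M.card_le_choose_two.trans (Nat.choose_le_choose 2 (Nat.le_of_lt_succ h))
    simp [hcard, Nat.choose] at this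
  obtain ⟨i⟩ : Nonempty ι := Fintype.card_pos_iff.1 (by omega)
  obtain ⟨x, y, hi⟩ : ∃ x y, M.edge i = s(x, y) := ⟨_, _, (Quot.out_eq (M.edge i)).symm⟩
  have hx : x ∈ M.vertices := mem_biUnion.2 ⟨i, mem_univ _, by simp [hi]⟩
  have hy : y ∈ (M.vertices).erase x := mem_erase.2 ⟨fun h ↦ M.not_isDiag i (by simp [hi, h]),
    mem_biUnion.2 ⟨i, mem_univ _, by simp [hi]⟩⟩
  have hrest := card_nsmul_le_sum (((M.vertices).erase x).erase y) (fun w ↦ #(M.star w)) 4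
    fun w hw ↦ M.four_le_card_star hcard (mem_of_mem_erase (mem_of_mem_erase hw))
  rw [card_erase_of_mem hy, card_erase_of_mem hx, smul_eq_mul] at hrest
  have := M.sum_card_star
  rw [← add_sum_erase _ _ hx, ← add_sum_erase _ _ hy] at this
  have := M.ten_le_card_star_add_card_star hcard hi
  omega

theorem sixK2_adj_iff {u v : Fin 6 ⊕ Fin 6} : sixK2.Adj u v ↔ v = u.swap := by
  constructor
  · rintro ⟨i, ⟨rfl, rfl⟩ | ⟨rfl, rfl⟩⟩ <;> rfl
  · rintro rfl
    rcases u with i | i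
    exacts [⟨i, .inl ⟨rfl, rfl⟩⟩, ⟨i, .inr ⟨rfl, rfl⟩⟩]

section OfIso

variable {V C : Type*} {H : SimpleGraph V} {φ : H.edgeSet → C}

theorem colorLineGraph_adj_iff_of_iso (e : sixK2ᶜ ≃g colorLineGraph H φ)
    {u v : Fin 6 ⊕ Fin 6} : (colorLineGraph H φ).Adj (e u) (e v) ↔ u ≠ v ∧ v ≠ u.swap := by
  rw [e.map_adj_iff, compl_adj, sixK2_adj_iff]

theorem not_meets_and_color_ne_of_iso (e : sixK2ᶜ ≃g colorLineGraph H φ) (u : Fin 6 ⊕ Fin 6) :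
    ¬ (e u : Sym2 V).Meets (e u.swap) ∧ φ (e u) ≠ φ (e u.swap) := by
  have hne : e u ≠ e u.swap := e.injective.ne (by cases u <;> simp)
  have h := (colorLineGraph_adj_iff_of_iso e (u := u) (v := u.swap)).not.2 (by simp)
  exact not_or.1 fun h' ↦ h ⟨hne, h'⟩

def CoMatchingRealization.ofIso (e : sixK2ᶜ ≃g colorLineGraph H φ) :
    CoMatchingRealization (Fin 6 ⊕ Fin 6) V C where
  edge u := e u
  color u := φ (e u)
  partner := Sum.swap
  edge_injective := Subtype.val_injective.comp e.injective
  not_isDiag u := H.not_isDiag_of_mem_edgeSet (e u).2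
  partner_involutive := Sum.swap_swap
  not_meets_partner u := (not_meets_and_color_ne_of_iso e u).1
  color_partner_ne u := (not_meets_and_color_ne_of_iso e u).2
  meets_or_color_eq _ _ huv hv := ((colorLineGraph_adj_iff_of_iso e).2 ⟨huv, hv⟩).2

end OfIso

/-- The complement of `6K₂` is not a color-line graph. -/
theorem compl_sixK2_not_colorLine : ¬ IsColorLineGraph sixK2ᶜ := by
  rintro ⟨V, C, _, H, φ, ⟨e⟩⟩
  exact (CoMatchingRealization.ofIso e).card_ne_twelve rfl
end

section
/- For every integer k ≥ 1 and every finite simple graph G: G is a k-color-line graph if and only if the graph G + K1, obtained from G by adding one new isolated vertex, is a (k+1)-color-line graph. -/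
open SimpleGraph

/-! An isolated vertex of `CL(H, φ)` is an edge of `H` sharing neither an endpoint nor a color
with any other edge. So `G + K₁ ≅ CL(H ⊕ K₂)` when `G ≅ CL(H)` and the new edge gets a fresh color,
and conversely, if `G + K₁ ≅ CL(H, φ)` with the new vertex sent to the edge `x`, then
`G ≅ CL(H - x)`, where the `k` colors other than `φ x` are renumbered along `(φ x).succAbove`. -/

namespace SimpleGraph

variable {α β : Type*} {G : SimpleGraph α} {Γ : SimpleGraph β}

theorem map_some_adj_some {a b : α} :
    (G.map Function.Embedding.some).Adj (some a) (some b) ↔ G.Adj a b :=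
  map_adj_apply

theorem not_map_some_adj_none (o : Option α) : ¬(G.map Function.Embedding.some).Adj none o := by
  rw [map_adj]
  rintro ⟨_, _, -, h, -⟩
  exact Option.some_ne_none _ h

theorem nonempty_map_some_iso_iff :
    Nonempty (G.map Function.Embedding.some ≃g Γ) ↔
      ∃ x, (∀ y, ¬Γ.Adj x y) ∧ Nonempty (G ≃g Γ.induce {y | y ≠ x}) := by
  classical
  constructor
  · rintro ⟨θ⟩
    refine ⟨θ none, fun y h => ?_, ⟨Equiv.optionSubtype (θ none) ⟨θ.toEquiv, rfl⟩, ?_⟩⟩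
    · rw [← θ.apply_symm_apply y, θ.map_rel_iff] at h
      exact not_map_some_adj_none _ h
    · intro a b
      exact θ.map_rel_iff.trans map_some_adj_some
  · rintro ⟨x, hx, ⟨ι⟩⟩
    refine ⟨⟨(Equiv.optionSubtype x).symm ι.toEquiv, ?_⟩⟩
    rintro (_ | a) (_ | b)
    · exact iff_of_false (hx x) (not_map_some_adj_none _)
    · exact iff_of_false (hx _) (not_map_some_adj_none _)
    · exact iff_of_false (fun h => hx _ h.symm) (fun h => not_map_some_adj_none _ h.symm)
    · exact ι.map_rel_iff.trans map_some_adj_some.symm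

end SimpleGraph

theorem Sym2.exists_mem_map_and_mem_map_iff {α β : Type*} {f : α → β}
    (hf : Function.Injective f) {s t : Sym2 α} :
    (∃ w, w ∈ s.map f ∧ w ∈ t.map f) ↔ ∃ v, v ∈ s ∧ v ∈ t := by
  simp only [Sym2.mem_map]
  constructor
  · rintro ⟨_, ⟨v, hv, rfl⟩, ⟨u, hu, huv⟩⟩
    exact ⟨v, hv, hf huv ▸ hu⟩
  · rintro ⟨v, hvs, hvt⟩
    exact ⟨f v, ⟨v, hvs, rfl⟩, ⟨v, hvt, rfl⟩⟩

section ColorLineGraph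

variable {V V' C C' : Type*} {H : SimpleGraph V} {H' : SimpleGraph V'}
  {φ : H.edgeSet → C} {φ' : H'.edgeSet → C'}

def colorLineGraphIsoInduce (s : Set H'.edgeSet) (σ : H.edgeSet ≃ s)
    (hshare : ∀ e f, (∃ v, v ∈ ((σ e : H'.edgeSet) : Sym2 V') ∧ v ∈ ((σ f : H'.edgeSet) : Sym2 V'))
      ↔ ∃ v, v ∈ (e : Sym2 V) ∧ v ∈ (f : Sym2 V))
    (hcolor : ∀ e f, φ' (σ e) = φ' (σ f) ↔ φ e = φ f) :
    colorLineGraph H φ ≃g (colorLineGraph H' φ').induce s where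
  toEquiv := σ
  map_rel_iff' {e f} := by
    refine and_congr ?_ (or_congr (hshare e f) (hcolor e f))
    exact (Subtype.val_injective.ne_iff).trans σ.injective.ne_iff

end ColorLineGraph

section AddEdge

variable {V : Type*} (H : SimpleGraph V)

instance uniqueEdgeSetTopBool : Unique (⊤ : SimpleGraph Bool).edgeSet where
  default := ⟨s(false, true), by simp⟩
  uniq := by
    rintro ⟨e, he⟩
    induction e using Sym2.ind with
    | h a b =>
      cases a <;> cases b
      all_goals first | rfl | exact Subtype.ext Sym2.eq_swap | exact absurd rfl he

def optionEdgeSetEquivSumTopBool : Option H.edgeSet ≃ (H ⊕g (⊤ : SimpleGraph Bool)).edgeSet :=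
  (Equiv.optionEquivSumPUnit.{0} _).trans
    ((Equiv.sumCongr (Equiv.refl _) (Equiv.ofUnique _ _)).trans edgeSetSumEquiv.symm)

theorem coe_optionEdgeSetEquivSumTopBool_some (e : H.edgeSet) :
    (optionEdgeSetEquivSumTopBool H (some e) : Sym2 (V ⊕ Bool)) = Sym2.map Sum.inl e := by
  obtain ⟨⟨u, v⟩, he⟩ := e
  rfl

theorem coe_optionEdgeSetEquivSumTopBool_none :
    (optionEdgeSetEquivSumTopBool H none : Sym2 (V ⊕ Bool)) = s(.inr false, .inr true) :=
  rfl

variable {H} {k : ℕ}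

def sumTopBoolColoring (φ : H.edgeSet → Fin k) :
    (H ⊕g (⊤ : SimpleGraph Bool)).edgeSet → Fin (k + 1) :=
  fun e => ((optionEdgeSetEquivSumTopBool H).symm e).elim (Fin.last k) (Fin.castSucc ∘ φ)

variable (φ : H.edgeSet → Fin k)

theorem sumTopBoolColoring_some (e : H.edgeSet) :
    sumTopBoolColoring φ (optionEdgeSetEquivSumTopBool H (some e)) = (φ e).castSucc := by
  simp [sumTopBoolColoring]

theorem sumTopBoolColoring_none :
    sumTopBoolColoring φ (optionEdgeSetEquivSumTopBool H none) = Fin.last k := by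
  simp [sumTopBoolColoring]

theorem colorLineGraph_sumTopBool_not_adj_none (y) :
    ¬(colorLineGraph _ (sumTopBoolColoring φ)).Adj (optionEdgeSetEquivSumTopBool H none) y := by
  obtain ⟨_ | e, rfl⟩ := (optionEdgeSetEquivSumTopBool H).surjective y
  · exact (colorLineGraph _ _).loopless.irrefl _
  rintro ⟨-, ⟨v, hv_new, hv_old⟩ | hcolor⟩
  · rw [coe_optionEdgeSetEquivSumTopBool_none] at hv_new
    rw [coe_optionEdgeSetEquivSumTopBool_some, Sym2.mem_map] at hv_old
    obtain ⟨w, -, rfl⟩ := hv_old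
    simp at hv_new
  · rw [sumTopBoolColoring_none, sumTopBoolColoring_some] at hcolor
    exact (Fin.castSucc_lt_last _).ne' hcolor

theorem nonempty_colorLineGraph_iso_induce_sumTopBool :
    Nonempty (colorLineGraph H φ ≃g (colorLineGraph _ (sumTopBoolColoring φ)).induce
      {y | y ≠ optionEdgeSetEquivSumTopBool H none}) := by
  classical
  refine ⟨colorLineGraphIsoInduce _
    (Equiv.optionSubtype _ ⟨optionEdgeSetEquivSumTopBool H, rfl⟩) (fun e f => ?_) (fun e f => ?_)⟩
  · rw [Equiv.coe_optionSubtype_apply_apply, Equiv.coe_optionSubtype_apply_apply,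
      coe_optionEdgeSetEquivSumTopBool_some, coe_optionEdgeSetEquivSumTopBool_some]
    exact Sym2.exists_mem_map_and_mem_map_iff Sum.inl_injective
  · rw [Equiv.coe_optionSubtype_apply_apply, Equiv.coe_optionSubtype_apply_apply,
      sumTopBoolColoring_some, sumTopBoolColoring_some, Fin.castSucc_inj]

end AddEdge

section DeleteEdge

variable {V : Type*} {H : SimpleGraph V} (x : H.edgeSet)

def edgeSetDeleteEdgesEquiv :
    (H.deleteEdges {(x : Sym2 V)}).edgeSet ≃ {e : H.edgeSet | e ≠ x} where
  toFun e :=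
    have he := (H.edgeSet_deleteEdges _ ▸ e.2 : (e : Sym2 V) ∈ H.edgeSet \ {(x : Sym2 V)})
    ⟨⟨e, he.1⟩, fun h => he.2 (congrArg Subtype.val h)⟩
  invFun e := ⟨e.1, H.edgeSet_deleteEdges _ ▸ ⟨e.1.2, fun h => e.2 (Subtype.ext h)⟩⟩
  left_inv _ := rfl
  right_inv _ := rfl

theorem exists_colorLineGraph_deleteEdges_iso_induce {k : ℕ} {φ : H.edgeSet → Fin (k + 1)}
    (hx : ∀ y, ¬(colorLineGraph H φ).Adj x y) :
    ∃ ψ : (H.deleteEdges {(x : Sym2 V)}).edgeSet → Fin k,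
      Nonempty (colorLineGraph _ ψ ≃g (colorLineGraph H φ).induce {y | y ≠ x}) := by
  have hcolor (e) : φ (edgeSetDeleteEdgesEquiv x e) ≠ φ x := fun h =>
    hx _ ⟨(edgeSetDeleteEdgesEquiv x e).2.symm, Or.inr h.symm⟩
  choose ψ hψ using fun e => Fin.exists_succAbove_eq (hcolor e)
  refine ⟨ψ, ⟨colorLineGraphIsoInduce _ (edgeSetDeleteEdgesEquiv x) (fun _ _ => Iff.rfl)
    fun e f => ?_⟩⟩
  rw [← hψ e, ← hψ f, Fin.succAbove_right_inj]

end DeleteEdge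

theorem kColorLine_iff_addIsolated_general {α : Type} (k : ℕ) (G : SimpleGraph α) :
    IsKColorLineGraph k G ↔
      IsKColorLineGraph (k + 1) (G.map (Function.Embedding.some : α ↪ Option α)) := by
  simp only [IsKColorLineGraph, nonempty_map_some_iso_iff]
  constructor
  · rintro ⟨V, _, H, φ, ⟨θ⟩⟩
    obtain ⟨ι⟩ := nonempty_colorLineGraph_iso_induce_sumTopBool φ
    exact ⟨V ⊕ Bool, inferInstance, _, sumTopBoolColoring φ, _,
      colorLineGraph_sumTopBool_not_adj_none φ, ⟨θ.trans ι⟩⟩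
  · rintro ⟨V, hV, H, φ, x, hx, ⟨θ⟩⟩
    obtain ⟨ψ, ⟨ι⟩⟩ := exists_colorLineGraph_deleteEdges_iso_induce x hx
    exact ⟨V, hV, _, ψ, ⟨θ.trans ι.symm⟩⟩

/-- `G` is a `k`-color-line graph iff `G + K₁` (adding one isolated vertex)
is a `(k+1)`-color-line graph. -/
theorem kColorLine_iff_addIsolated {α : Type} [Fintype α] (k : ℕ) (hk : 1 ≤ k)
    (G : SimpleGraph α) :
    IsKColorLineGraph k G ↔
      IsKColorLineGraph (k + 1) (G.map (Function.Embedding.some : α ↪ Option α)) :=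
  kColorLine_iff_addIsolated_general k G
end

section
/- For every integer k ≥ 1, a finite simple graph G is a proper k-color-line graph if and only if the vertex set of G admits a partition into at most k cliques, V(G) = Q1 ∪ … ∪ Qk, such that the graph obtained from G by deleting, for each i, all edges with both endpoints in Qi is a line graph. -/
open SimpleGraph

/-! The colour-line graph `CL(H, φ)` is the union of `L(H)` and the complete graphs on the colour
classes of `φ`, and `φ` is proper exactly when these two graphs share no edge. Hence for a proper
`φ` the colour classes form the clique partition, and deleting their edges leaves `L(H)`.
Conversely, given the partition and an isomorphism `τ` from the rest onto `L(H)`, colouring an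
edge of `H` by the part containing its `τ`-preimage is proper and recovers `G` as `CL(H, φ)`. -/

namespace SimpleGraph

variable {α β ι : Type*}

def fiberGraph (c : α → ι) : SimpleGraph α where
  Adj u v := u ≠ v ∧ c u = c v
  symm := ⟨fun _ _ h => ⟨h.1.symm, h.2.symm⟩⟩
  loopless := ⟨fun _ h => h.1 rfl⟩

@[simp]
lemma fiberGraph_adj {c : α → ι} {u v : α} : (fiberGraph c).Adj u v ↔ u ≠ v ∧ c u = c v :=
  Iff.rfl

lemma fiberGraph_le_iff {G : SimpleGraph α} {c : α → ι} :
    fiberGraph c ≤ G ↔ ∀ i, G.IsClique {v | c v = i} := by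
  constructor
  · rintro h i u (rfl : c u = i) v hv huv
    exact h ⟨huv, hv.symm⟩
  · rintro h u v ⟨huv, hc⟩
    exact h (c u) rfl hc.symm huv

lemma deleteEdges_fiber_eq_sdiff (G : SimpleGraph α) (c : α → ι) :
    G.deleteEdges {e | ∃ i, ∀ x ∈ e, c x = i} = G \ fiberGraph c := by
  ext u v
  simp only [deleteEdges_adj, Set.mem_ofPred_eq, Sym2.ball, sdiff_adj, fiberGraph_adj]
  constructor
  · rintro ⟨h, hne⟩
    exact ⟨h, fun ⟨_, hc⟩ => hne ⟨c u, rfl, hc.symm⟩⟩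
  · rintro ⟨h, hne⟩
    exact ⟨h, fun ⟨i, hu, hv⟩ => hne ⟨h.ne, hu.trans hv.symm⟩⟩

namespace Iso

variable {G : SimpleGraph α} {G' : SimpleGraph β} {c : α → ι} {c' : β → ι}

lemma fiberGraph_adj_iff (σ : G ≃g G') (hc : c' ∘ σ = c) {u v : α} :
    (fiberGraph c').Adj (σ u) (σ v) ↔ (fiberGraph c).Adj u v := by
  simp [← hc, σ.injective.ne_iff]

lemma fiberGraph_le_iff (σ : G ≃g G') (hc : c' ∘ σ = c) :
    fiberGraph c ≤ G ↔ fiberGraph c' ≤ G' := by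
  refine ⟨fun h u v huv => ?_, fun h u v huv => ?_⟩
  · rw [← σ.apply_symm_apply u, ← σ.apply_symm_apply v] at huv ⊢
    exact σ.map_adj_iff.2 (h ((σ.fiberGraph_adj_iff hc).1 huv))
  · exact σ.map_adj_iff.1 (h ((σ.fiberGraph_adj_iff hc).2 huv))

lemma disjoint_fiberGraph_iff (σ : G ≃g G') (hc : c' ∘ σ = c) :
    Disjoint G (fiberGraph c) ↔ Disjoint G' (fiberGraph c') := by
  simp only [disjoint_iff_inf_le]
  refine ⟨fun h u v ⟨huv, hc'⟩ => ?_, fun h u v ⟨huv, hc'⟩ => ?_⟩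
  · rw [← σ.apply_symm_apply u, ← σ.apply_symm_apply v] at huv hc'
    exact h ⟨σ.map_adj_iff.1 huv, (σ.fiberGraph_adj_iff hc).1 hc'⟩
  · exact h ⟨σ.map_adj_iff.2 huv, (σ.fiberGraph_adj_iff hc).2 hc'⟩

def sdiffFiberGraph (σ : G ≃g G') (hc : c' ∘ σ = c) :
    G \ fiberGraph c ≃g G' \ fiberGraph c' where
  toEquiv := σ.toEquiv
  map_rel_iff' := by
    intros
    simp only [sdiff_adj, RelIso.coe_fn_toEquiv, σ.map_adj_iff, σ.fiberGraph_adj_iff hc]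

def supFiberGraph (σ : G ≃g G') (hc : c' ∘ σ = c) :
    G ⊔ fiberGraph c ≃g G' ⊔ fiberGraph c' where
  toEquiv := σ.toEquiv
  map_rel_iff' := by
    intros
    simp only [sup_adj, RelIso.coe_fn_toEquiv, σ.map_adj_iff, σ.fiberGraph_adj_iff hc]

end Iso

end SimpleGraph

lemma existsUnique_mem_iff_exists_eq_fibers {α ι : Type*} {Q : ι → Set α} :
    (∀ v, ∃! i, v ∈ Q i) ↔ ∃ c : α → ι, Q = fun i => {v | c v = i} := by
  constructor
  · intro h
    choose c hc huniq using h
    exact ⟨c, funext fun i => Set.ext fun v => ⟨fun hv => (huniq v i hv).symm, by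
      rintro rfl; exact hc v⟩⟩
  · rintro ⟨c, rfl⟩ v
    exact ⟨c v, rfl, fun _ h => h.symm⟩

section ColorLineGraph

variable {V C : Type*} {H : SimpleGraph V} {φ : H.edgeSet → C}

lemma colorLineGraph_eq_lineGraph_sup_fiberGraph :
    colorLineGraph H φ = H.lineGraph ⊔ fiberGraph φ := by
  ext e f
  simp only [colorLineGraph, sup_adj, lineGraph_adj_iff_exists, fiberGraph_adj, and_or_left]

lemma isProperEdgeColoring_iff_disjoint :
    IsProperEdgeColoring H φ ↔ Disjoint H.lineGraph (fiberGraph φ) := by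
  simp only [IsProperEdgeColoring, disjoint_iff_inf_le]
  refine ⟨fun h e f ⟨hL, hne, hc⟩ => ?_, fun h e f hne hv hc => h ⟨?_, hne, hc⟩⟩
  · exact h e f hne (lineGraph_adj_iff_exists.1 hL).2 hc
  · exact lineGraph_adj_iff_exists.2 ⟨hne, hv⟩

end ColorLineGraph

theorem properKColorLine_iff_cliquePartition_general {α : Type} (k : ℕ)
    (G : SimpleGraph α) :
    IsProperKColorLineGraph k G ↔
      ∃ Q : Fin k → Set α,
        (∀ i, G.IsClique (Q i)) ∧
        (∀ v : α, ∃! i, v ∈ Q i) ∧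
        IsLineGraph (G.deleteEdges {e : Sym2 α | ∃ i, ∀ x ∈ e, x ∈ Q i}) := by
  constructor
  · rintro ⟨V, _, H, φ, hφ, ⟨σ⟩⟩
    rw [isProperEdgeColoring_iff_disjoint] at hφ
    rw [colorLineGraph_eq_lineGraph_sup_fiberGraph] at σ
    refine ⟨fun i => {v | (φ ∘ σ) v = i}, ?_, existsUnique_mem_iff_exists_eq_fibers.2 ⟨_, rfl⟩,
      V, inferInstance, H, ?_⟩
    · exact fiberGraph_le_iff.1 <| (σ.fiberGraph_le_iff rfl).2 le_sup_right
    · simp only [Set.mem_ofPred_eq, deleteEdges_fiber_eq_sdiff]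
      have σ' := σ.sdiffFiberGraph (c' := φ) rfl
      rw [hφ.sup_sdiff_cancel_right] at σ'
      exact ⟨σ'⟩
  · rintro ⟨Q, hQ, hpart, V, _, H, ⟨τ⟩⟩
    obtain ⟨c, rfl⟩ := existsUnique_mem_iff_exists_eq_fibers.1 hpart
    rw [← fiberGraph_le_iff] at hQ
    simp only [Set.mem_ofPred_eq, deleteEdges_fiber_eq_sdiff] at τ
    have hc : (c ∘ τ.symm) ∘ τ = c := funext fun v => congrArg c (τ.symm_apply_apply v)
    refine ⟨V, inferInstance, H, c ∘ τ.symm, ?_, ?_⟩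
    · rw [isProperEdgeColoring_iff_disjoint, ← τ.disjoint_fiberGraph_iff hc]
      exact disjoint_sdiff_self_left
    · rw [colorLineGraph_eq_lineGraph_sup_fiberGraph]
      have τ' := τ.supFiberGraph hc
      rw [sdiff_sup_cancel hQ] at τ'
      exact ⟨τ'⟩

/-- `G` is a proper `k`-color-line graph iff `V(G)` has a partition into at most `k`
cliques such that deleting all edges inside the parts leaves a line graph. -/
theorem properKColorLine_iff_cliquePartition {α : Type} [Fintype α] (k : ℕ) (hk : 1 ≤ k)
    (G : SimpleGraph α) :
    IsProperKColorLineGraph k G ↔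
      ∃ Q : Fin k → Set α,
        (∀ i, G.IsClique (Q i)) ∧
        (∀ v : α, ∃! i, v ∈ Q i) ∧
        IsLineGraph (G.deleteEdges {e : Sym2 α | ∃ i, ∀ x ∈ e, x ∈ Q i}) :=
  properKColorLine_iff_cliquePartition_general k G
end

section
/- Let k ≥ 1 be an integer, let G be a proper k-color-line graph, and let Q be a maximal clique of G with at least k + 4 vertices. Then the induced subgraph G − Q, obtained by deleting the vertices of Q, is a proper (k−1)-color-line graph. -/
open SimpleGraph

/-!
In a proper colouring, two distinct edges of a clique of `CL(H)` meet if and only if their colours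
differ. So a colour used three times in a clique `S`, on pairwise disjoint edges, is the colour of
every edge of `S`: an edge of another colour cannot meet three disjoint edges. If no colour
is used three times, then `#S ≤ 2k`, and a colour used exactly twice, on disjoint edges `ab` and
`uv`, forces every other edge of `S` to join `{a, b}` to `{u, v}`, so `#S ≤ 6`; both together
contradict `k + 4 ≤ #S`. Hence the big maximal clique `Q` is a full colour class of `H`, and
`G − Q` is the colour-line graph of `H` with that colour class deleted, which needs only the
remaining `k − 1` colours.
-/

open scoped Finset

namespace SimpleGraph.IsClique

variable {V C : Type*} {H : SimpleGraph V} {φ : H.edgeSet → C}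

theorem exists_mem_mem_of_color_ne {S : Set H.edgeSet} (hS : (colorLineGraph H φ).IsClique S)
    {e f : H.edgeSet} (he : e ∈ S) (hf : f ∈ S) (hc : φ e ≠ φ f) :
    ∃ v, v ∈ (e : Sym2 V) ∧ v ∈ (f : Sym2 V) :=
  (hS he hf fun h ↦ hc (congrArg φ h)).2.resolve_right hc

variable {S : Finset H.edgeSet}

theorem card_le_six_of_colorClass_eq_pair (hp : IsProperEdgeColoring H φ)
    (hS : (colorLineGraph H φ).IsClique (S : Set H.edgeSet)) {c : C} {e₁ e₂ : H.edgeSet}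
    (hne : e₁ ≠ e₂) (mem_pair : ∀ {e}, e ∈ S ∧ φ e = c ↔ e = e₁ ∨ e = e₂) : #S ≤ 6 := by
  classical
  obtain ⟨he₁, hc₁⟩ := mem_pair.2 (Or.inl rfl)
  obtain ⟨he₂, hc₂⟩ := mem_pair.2 (Or.inr rfl)
  obtain ⟨a, b, hab⟩ : ∃ a b, (e₁ : Sym2 V) = s(a, b) := Sym2.exists.1 ⟨_, rfl⟩
  obtain ⟨u, v, huv⟩ : ∃ u v, (e₂ : Sym2 V) = s(u, v) := Sym2.exists.1 ⟨_, rfl⟩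
  have cross (f : H.edgeSet) (hf : f ∈ S) (hf₁ : f ≠ e₁) (hf₂ : f ≠ e₂) :
      (f : Sym2 V) ∈ ({s(a, u), s(a, v), s(b, u), s(b, v)} : Finset (Sym2 V)) := by
    have hfc : φ f ≠ c := fun h ↦ (mem_pair.1 ⟨hf, h⟩).elim hf₁ hf₂
    obtain ⟨w₁, hw₁f, hw₁⟩ := hS.exists_mem_mem_of_color_ne (Finset.mem_coe.2 hf)
      (Finset.mem_coe.2 he₁) (hc₁ ▸ hfc)
    obtain ⟨w₂, hw₂f, hw₂⟩ := hS.exists_mem_mem_of_color_ne (Finset.mem_coe.2 hf)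
      (Finset.mem_coe.2 he₂) (hc₂ ▸ hfc)
    have hw : w₁ ≠ w₂ := by
      rintro rfl
      exact hp e₁ e₂ hne ⟨w₁, hw₁, hw₂⟩ (hc₁.trans hc₂.symm)
    rw [(Sym2.mem_and_mem_iff hw).1 ⟨hw₁f, hw₂f⟩]
    rw [hab, Sym2.mem_iff] at hw₁
    rw [huv, Sym2.mem_iff] at hw₂
    rcases hw₁ with rfl | rfl <;> rcases hw₂ with rfl | rfl <;> simp
  calc #S ≤ #({s(a, b), s(u, v), s(a, u), s(a, v), s(b, u), s(b, v)} : Finset (Sym2 V)) := by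
        refine Finset.card_le_card_of_injOn (↑) (fun f hf ↦ ?_) Subtype.val_injective.injOn
        by_cases hf₁ : f = e₁
        · simp [hf₁, hab]
        by_cases hf₂ : f = e₂
        · simp [hf₂, huv]
        exact Finset.mem_insert_of_mem (Finset.mem_insert_of_mem (cross f hf hf₁ hf₂))
    _ ≤ 6 := Finset.card_le_six

variable [DecidableEq C]

theorem color_eq_of_two_lt_card_filter (hp : IsProperEdgeColoring H φ)
    (hS : (colorLineGraph H φ).IsClique (S : Set H.edgeSet)) {c : C}
    (h3 : 2 < #{e ∈ S | φ e = c}) {f : H.edgeSet} (hf : f ∈ S) : φ f = c := by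
  obtain ⟨e₁, he₁, e₂, he₂, e₃, he₃, h₁₂, h₁₃, h₂₃⟩ := Finset.two_lt_card.mp h3
  simp only [Finset.mem_filter] at he₁ he₂ he₃
  by_contra hfc
  have meet (e : H.edgeSet) (he : e ∈ S ∧ φ e = c) : ∃ v, v ∈ (f : Sym2 V) ∧ v ∈ (e : Sym2 V) :=
    hS.exists_mem_mem_of_color_ne (Finset.mem_coe.2 hf) (Finset.mem_coe.2 he.1) (he.2 ▸ hfc)
  have not_meet {e e' : H.edgeSet} (he : φ e = c) (he' : φ e' = c) (hne : e ≠ e')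
      (v : V) (hv : v ∈ (e : Sym2 V)) (hv' : v ∈ (e' : Sym2 V)) : False :=
    hp e e' hne ⟨v, hv, hv'⟩ (he.trans he'.symm)
  obtain ⟨v₁, hv₁, hv₁'⟩ := meet e₁ he₁
  obtain ⟨v₂, hv₂, hv₂'⟩ := meet e₂ he₂
  obtain ⟨v₃, hv₃, hv₃'⟩ := meet e₃ he₃
  obtain rfl | h₁₂' := eq_or_ne v₁ v₂
  · exact not_meet he₁.2 he₂.2 h₁₂ _ hv₁' hv₂'
  rw [(Sym2.mem_and_mem_iff h₁₂').1 ⟨hv₁, hv₂⟩, Sym2.mem_iff] at hv₃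
  rcases hv₃ with rfl | rfl
  · exact not_meet he₁.2 he₃.2 h₁₃ _ hv₁' hv₃'
  · exact not_meet he₂.2 he₃.2 h₂₃ _ hv₂' hv₃'

theorem exists_color_eq_of_card_add_four_le [Fintype C] (hp : IsProperEdgeColoring H φ)
    (hS : (colorLineGraph H φ).IsClique (S : Set H.edgeSet)) (hcard : Fintype.card C + 4 ≤ #S) :
    ∃ c, ∀ e ∈ S, φ e = c := by
  classical
  by_cases h3 : ∃ c, 2 < #{e ∈ S | φ e = c}
  · obtain ⟨c, hc⟩ := h3
    exact ⟨c, fun f hf ↦ hS.color_eq_of_two_lt_card_filter hp hc hf⟩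
  push Not at h3
  have hmaps : Set.MapsTo φ S (Finset.univ : Finset C) := fun e _ ↦ Finset.mem_univ _
  have hle : #S ≤ 2 * Fintype.card C := by
    by_contra! hlt
    obtain ⟨c, -, hc⟩ := Finset.exists_lt_card_fiber_of_mul_lt_card_of_maps_to (n := 2) hmaps
      (by rw [Finset.card_univ]; omega)
    exact (h3 c).not_gt hc
  obtain ⟨c, -, hc⟩ := Finset.exists_lt_card_fiber_of_mul_lt_card_of_maps_to (n := 1) hmaps
    (by rw [Finset.card_univ]; omega)
  obtain ⟨e₁, e₂, hne, hpair⟩ := Finset.card_eq_two.1 (le_antisymm (h3 c) hc)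
  have := hS.card_le_six_of_colorClass_eq_pair hp (c := c) hne fun {e} ↦ by
    simpa using Finset.ext_iff.1 hpair e
  omega

end SimpleGraph.IsClique

theorem SimpleGraph.Iso.isClique_preimage_iff {α β : Type*} {G : SimpleGraph α}
    {G' : SimpleGraph β} (ψ : G ≃g G') {t : Set β} : G.IsClique (ψ ⁻¹' t) ↔ G'.IsClique t := by
  refine ⟨fun h x hx y hy hne ↦ ?_,
    fun h x hx y hy hne ↦ ψ.map_adj_iff.1 (h hx hy (ψ.injective.ne hne))⟩
  obtain ⟨x, rfl⟩ := ψ.surjective x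
  obtain ⟨y, rfl⟩ := ψ.surjective y
  exact ψ.map_adj_iff.2 (h (Set.mem_preimage.2 hx) hy (ne_of_apply_ne _ hne))

theorem IsProperKColorLineGraph.of_iso {k : ℕ} {α β : Type*} {G : SimpleGraph α}
    {G' : SimpleGraph β} (h : IsProperKColorLineGraph k G') (e : G ≃g G') :
    IsProperKColorLineGraph k G := by
  obtain ⟨V, hV, H, φ, hp, ⟨ψ⟩⟩ := h
  exact ⟨V, hV, H, φ, hp, ⟨e.trans ψ⟩⟩

section ColorClass

variable {V C : Type*} {H : SimpleGraph V}

theorem isClique_colorLineGraph_colorClass (φ : H.edgeSet → C) (c : C) :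
    (colorLineGraph H φ).IsClique {e | φ e = c} :=
  fun _ he _ hf hne ↦ ⟨hne, Or.inr (he.trans hf.symm)⟩

theorem colorLineGraph_comp_of_injective {C' : Type*} {g : C → C'} (hg : g.Injective)
    (φ : H.edgeSet → C) : colorLineGraph H (g ∘ φ) = colorLineGraph H φ := by
  ext e f
  simp [colorLineGraph, hg.eq_iff]

theorem IsProperEdgeColoring.of_comp {C' : Type*} {g : C → C'} {φ : H.edgeSet → C}
    (h : IsProperEdgeColoring H (g ∘ φ)) : IsProperEdgeColoring H φ :=
  fun e f hne hmeet hc ↦ h e f hne hmeet (congrArg g hc)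

def deleteColor (φ : H.edgeSet → C) (c : C) : SimpleGraph V :=
  H.deleteEdges ((↑) '' {e | φ e = c})

theorem coe_mem_edgeSet_deleteColor {φ : H.edgeSet → C} {c : C} {e : H.edgeSet} :
    (e : Sym2 V) ∈ (deleteColor φ c).edgeSet ↔ φ e ≠ c := by
  simp [deleteColor, Subtype.val_injective.mem_set_image]

variable {H' : SimpleGraph V} (h : H' ≤ H)

theorem IsProperEdgeColoring.comp_inclusion {φ : H.edgeSet → C} (hp : IsProperEdgeColoring H φ) :
    IsProperEdgeColoring H' (φ ∘ Set.inclusion (edgeSet_mono h)) :=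
  fun _ _ hne hmeet ↦ hp _ _ ((Set.inclusion_injective _).ne hne) hmeet

def colorLineGraphIsoInduceOfLE (φ : H.edgeSet → C) :
    colorLineGraph H' (φ ∘ Set.inclusion (edgeSet_mono h)) ≃g
      (colorLineGraph H φ).induce {e : H.edgeSet | (e : Sym2 V) ∈ H'.edgeSet} where
  toFun e := ⟨Set.inclusion (edgeSet_mono h) e, e.2⟩
  invFun e := ⟨e.1, e.2⟩
  map_rel_iff' := by simp [colorLineGraph, Subtype.ext_iff]

end ColorClass

theorem isProperKColorLineGraph_induce_color_ne {V : Type} [Fintype V] {H : SimpleGraph V}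
    {n : ℕ} {φ : H.edgeSet → Fin (n + 1)} (hp : IsProperEdgeColoring H φ) (c : Fin (n + 1)) :
    IsProperKColorLineGraph n ((colorLineGraph H φ).induce {e | φ e ≠ c}) := by
  have hle : deleteColor φ c ≤ H := deleteEdges_le _
  let φ' e : Fin n := (finSuccAboveEquiv c).symm
    ⟨φ (Set.inclusion (edgeSet_mono hle) e), coe_mem_edgeSet_deleteColor.1 e.2⟩
  have hφ' : c.succAbove ∘ φ' = φ ∘ Set.inclusion (edgeSet_mono hle) :=
    funext fun e ↦ congrArg Subtype.val ((finSuccAboveEquiv c).apply_symm_apply _)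
  have hset : {e : H.edgeSet | (e : Sym2 V) ∈ (deleteColor φ c).edgeSet} = {e | φ e ≠ c} :=
    Set.ext fun _ ↦ coe_mem_edgeSet_deleteColor
  refine ⟨V, inferInstance, deleteColor φ c, φ', ?_, ⟨?_⟩⟩
  · have hpc := hp.comp_inclusion hle
    rw [← hφ'] at hpc
    exact hpc.of_comp
  · rw [← colorLineGraph_comp_of_injective Fin.succAbove_right_injective φ', hφ', ← hset]
    exact (colorLineGraphIsoInduceOfLE hle φ).symm

theorem removal_of_big_maximal_clique_general {α : Type} [Fintype α] (k : ℕ)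
    (G : SimpleGraph α) (hG : IsProperKColorLineGraph k G)
    (Q : Finset α) (hclique : G.IsClique (Q : Set α))
    (hmax : ∀ R : Finset α, G.IsClique (R : Set α) → Q ⊆ R → R = Q)
    (hcard : k + 4 ≤ Q.card) :
    IsProperKColorLineGraph (k - 1) (G.induce ((Q : Set α)ᶜ)) := by
  classical
  obtain ⟨V, _, H, φ, hp, ⟨ψ⟩⟩ := hG
  have hS : (colorLineGraph H φ).IsClique (Q.map ψ.toEquiv.toEmbedding : Set H.edgeSet) := by
    rw [← ψ.isClique_preimage_iff, Finset.coe_map]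
    simpa [Set.preimage_image_eq _ ψ.injective] using hclique
  obtain ⟨c, hc⟩ := hS.exists_color_eq_of_card_add_four_le hp (by simpa using hcard)
  have hQ : (Q : Set α) = ψ ⁻¹' {e | φ e = c} := by
    have hR : G.IsClique (ψ ⁻¹' {e | φ e = c}) :=
      ψ.isClique_preimage_iff.2 (isClique_colorLineGraph_colorClass φ c)
    have hQR : Q ⊆ ({x | φ (ψ x) = c} : Finset α) := fun x hx ↦ by
      simpa using hc _ (Finset.mem_map_of_mem _ hx)
    rw [← hmax _ (by simpa using hR) hQR]
    simp
  obtain ⟨n, rfl⟩ := Nat.exists_eq_succ_of_ne_zero c.pos.ne'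
  refine (isProperKColorLineGraph_induce_color_ne hp c).of_iso (ψ.induce ?_)
  rw [hQ, ← Set.preimage_compl, Set.compl_ofPred]
  exact ψ.bijective.bijOn_preimage

/-- If `G` is a proper `k`-color-line graph and `Q` is a maximal clique of `G` with at
least `k + 4` vertices, then `G − Q` is a proper `(k−1)`-color-line graph. -/
theorem removal_of_big_maximal_clique {α : Type} [Fintype α] (k : ℕ) (hk : 1 ≤ k)
    (G : SimpleGraph α) (hG : IsProperKColorLineGraph k G)
    (Q : Finset α) (hclique : G.IsClique (Q : Set α))
    (hmax : ∀ R : Finset α, G.IsClique (R : Set α) → Q ⊆ R → R = Q)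
    (hcard : k + 4 ≤ Q.card) :
    IsProperKColorLineGraph (k - 1) (G.induce ((Q : Set α)ᶜ)) :=
  removal_of_big_maximal_clique_general k G hG Q hclique hmax hcard
end

section
/- Let k ≥ 1 be an integer, let G be a proper k-color-line graph, and let Q be a maximal clique of G with at least k + 4 vertices. Then for every partition V(G) = Q1 ∪ Q2 ∪ … ∪ Qk of the vertex set of G into cliques such that the graph obtained from G by deleting, for each i, all edges with both endpoints in Qi is a line graph, the clique Q equals Qi for some i. -/
open SimpleGraph

/-!
Write `G'` for `G` with the edges inside the parts deleted and `f v` for the part containing `v`.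
Since `Q` is a clique, `G'` induces on `Q` the complete multipartite graph whose parts are the
sets `Q ∩ P i`, and this graph is an induced subgraph of a line graph. If `Q` lies in no part, a
part meeting `Q` in three vertices would give a claw `K_{1,3}`, and four parts meeting `Q` twice
would give a `K_{1,2,2,2}`; neither is an induced subgraph of a line graph. So each part meets
`Q` at most twice, and at most three of them do, whence `|Q| ≤ k + 3`.
-/

open Finset SimpleGraph

theorem Sym2.eq_of_exists_mem_and_mem {V : Type*} {p q q' : Sym2 V} {u v : V} (hup : u ∈ p)
    (hvp : v ∉ p) (hvq : v ∈ q) (huq : u ∉ q) (hvq' : v ∈ q') (huq' : u ∉ q')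
    (hpq : ∃ w, w ∈ p ∧ w ∈ q) (hpq' : ∃ w, w ∈ p ∧ w ∈ q') : q = q' := by
  obtain ⟨w, hwp, hwq⟩ := hpq
  obtain ⟨w', hw'p, hw'q'⟩ := hpq'
  have hp : p = s(u, w) := (mem_and_mem_iff (ne_of_mem_of_not_mem hwq huq).symm).1 ⟨hup, hwp⟩
  have hp' : p = s(u, w') :=
    (mem_and_mem_iff (ne_of_mem_of_not_mem hw'q' huq').symm).1 ⟨hup, hw'p⟩
  have hww' : w = w' := Sym2.congr_right.1 (hp.symm.trans hp')
  rw [(mem_and_mem_iff (ne_of_mem_of_not_mem hwp hvp).symm).1 ⟨hvq, hwq⟩,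
    (mem_and_mem_iff (ne_of_mem_of_not_mem hw'p hvp).symm).1 ⟨hvq', hw'q'⟩, hww']

/-- `e` realises the complete multipartite graph on `Q` with parts the fibres of `f` as an
induced subgraph of a line graph. -/
structure IsMultipartiteLineModel {α ι V : Type*} (Q : Finset α) (f : α → ι) (e : α → Sym2 V) :
    Prop where
  injOn : Set.InjOn e Q
  not_isDiag : ∀ x ∈ Q, ¬ (e x).IsDiag
  meet_iff : ∀ x ∈ Q, ∀ y ∈ Q, x ≠ y → ((∃ w, w ∈ e x ∧ w ∈ e y) ↔ f x ≠ f y)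

namespace IsMultipartiteLineModel

variable {α ι V : Type*} {Q : Finset α} {f : α → ι} {e : α → Sym2 V} {a x y : α} {u v w : V}

theorem exists_mem_and_mem (h : IsMultipartiteLineModel Q f e) (hx : x ∈ Q) (hy : y ∈ Q)
    (hxy : f x ≠ f y) : ∃ w, w ∈ e x ∧ w ∈ e y :=
  (h.meet_iff x hx y hy fun h' => hxy (congrArg f h')).2 hxy

theorem notMem_of_mem (h : IsMultipartiteLineModel Q f e) (hx : x ∈ Q) (hy : y ∈ Q)
    (hne : x ≠ y) (hxy : f x = f y) (hw : w ∈ e x) : w ∉ e y :=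
  fun hw' => (h.meet_iff x hx y hy hne).1 ⟨w, hw, hw'⟩ hxy

theorem card_fiber_le_two [DecidableEq ι] (h : IsMultipartiteLineModel Q f e) (ha : a ∈ Q)
    {i : ι} (hai : f a ≠ i) : #{x ∈ Q | f x = i} ≤ 2 := by
  classical
  obtain ⟨u, v, huv⟩ : ∃ u v, e a = s(u, v) := Sym2.ind (fun u v => ⟨u, v, rfl⟩) (e a)
  have hmem : ∀ x ∈ {x ∈ Q | f x = i}, (if u ∈ e x then u else v) ∈ e x := by
    intro x hx
    rw [mem_filter] at hx
    obtain ⟨w, hwa, hwx⟩ := h.exists_mem_and_mem ha hx.1 (hx.2 ▸ hai)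
    rw [huv, Sym2.mem_iff] at hwa
    split_ifs with hu
    · exact hu
    · exact hwa.resolve_left (by rintro rfl; exact hu hwx) ▸ hwx
  by_contra! hlt
  obtain ⟨x, hx, y, hy, hne, hxy⟩ := exists_ne_map_eq_of_card_lt_of_maps_to
    (card_le_two.trans_lt hlt) (t := {u, v}) (f := fun x => if u ∈ e x then u else v)
    fun x _ => by dsimp only; split_ifs <;> simp
  have hxQ := mem_filter.1 hx
  have hyQ := mem_filter.1 hy
  exact h.notMem_of_mem hxQ.1 hyQ.1 hne (hxQ.2.trans hyQ.2.symm) (hmem x hx)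
    (hxy ▸ hmem y hy)

theorem mem_iff_notMem (h : IsMultipartiteLineModel Q f e) (ha : a ∈ Q) (huv : e a = s(u, v))
    (hx : x ∈ Q) (hxa : f x ≠ f a) : u ∈ e x ↔ v ∉ e x := by
  constructor
  · intro hu hv
    have hne : u ≠ v := by simpa [huv] using h.not_isDiag a ha
    exact hxa (congrArg f (h.injOn hx ha (((Sym2.mem_and_mem_iff hne).1 ⟨hu, hv⟩).trans huv.symm)))
  · intro hv
    obtain ⟨w, hwx, hwa⟩ := h.exists_mem_and_mem hx ha hxa
    rw [huv, Sym2.mem_iff] at hwa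
    rcases hwa with rfl | rfl
    · exact hwx
    · exact absurd hwx hv

theorem exists_mem_of_one_lt_card_fiber [DecidableEq ι] (h : IsMultipartiteLineModel Q f e)
    (ha : a ∈ Q) (huv : e a = s(u, v)) {i : ι} (hai : f a ≠ i)
    (hi : 1 < #{x ∈ Q | f x = i}) :
    ∃ c ∈ Q, ∃ d ∈ Q, f c = i ∧ f d = i ∧ u ∈ e c ∧ v ∈ e d := by
  obtain ⟨b, hb, b', hb', hne⟩ := one_lt_card.1 hi
  rw [mem_filter] at hb hb'
  have hmem := fun {x} (hx : x ∈ Q) (hxi : f x = i) => h.mem_iff_notMem ha huv hx (hxi ▸ hai.symm)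
  by_cases hu : u ∈ e b
  · refine ⟨b, hb.1, b', hb'.1, hb.2, hb'.2, hu, ?_⟩
    by_contra hv
    exact h.notMem_of_mem hb.1 hb'.1 hne (hb.2.trans hb'.2.symm) hu ((hmem hb'.1 hb'.2).2 hv)
  · have hv : v ∈ e b := by
      by_contra hv
      exact hu ((hmem hb.1 hb.2).2 hv)
    exact ⟨b', hb'.1, b, hb.1, hb'.2, hb.2,
      (hmem hb'.1 hb'.2).2 (h.notMem_of_mem hb.1 hb'.1 hne (hb.2.trans hb'.2.symm) hv), hv⟩

theorem card_filter_one_lt_card_fiber_le_three [Fintype ι] [DecidableEq ι]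
    (h : IsMultipartiteLineModel Q f e) : #{i | 1 < #{x ∈ Q | f x = i}} ≤ 3 := by
  set T : Finset ι := {i | 1 < #{x ∈ Q | f x = i}}
  by_contra! hT
  obtain ⟨i, hi⟩ : T.Nonempty := card_pos.1 (by omega)
  obtain ⟨a, ha⟩ : {x ∈ Q | f x = i}.Nonempty := card_pos.1 (zero_lt_one.trans (mem_filter.1 hi).2)
  rw [mem_filter] at ha
  obtain ⟨u, v, huv⟩ : ∃ u v, e a = s(u, v) := Sym2.ind (fun u v => ⟨u, v, rfl⟩) (e a)
  obtain ⟨i₂, i₃, i₄, h₂, h₃, h₄, h₂₃, h₂₄, h₃₄⟩ :=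
    two_lt_card_iff.1 (by rw [card_erase_of_mem hi]; omega : 2 < #(T.erase i))
  have hsplit := fun {j} (hj : j ∈ T.erase i) =>
    h.exists_mem_of_one_lt_card_fiber ha.1 huv (ha.2.trans_ne (ne_of_mem_erase hj).symm)
      (mem_filter.1 (mem_of_mem_erase hj)).2
  obtain ⟨c, hc, -, -, hci, -, huc, -⟩ := hsplit h₂
  obtain ⟨-, -, d₃, hd₃, -, hdi₃, -, hvd₃⟩ := hsplit h₃
  obtain ⟨-, -, d₄, hd₄, -, hdi₄, -, hvd₄⟩ := hsplit h₄
  have hmem := fun {x} (hx : x ∈ Q) {j} (hj : j ∈ T.erase i) (hxj : f x = j) =>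
    h.mem_iff_notMem ha.1 huv hx (hxj ▸ ha.2 ▸ ne_of_mem_erase hj)
  have hd : e d₃ = e d₄ :=
    Sym2.eq_of_exists_mem_and_mem huc ((hmem hc h₂ hci).1 huc) hvd₃
      (fun hu => (hmem hd₃ h₃ hdi₃).1 hu hvd₃) hvd₄ (fun hu => (hmem hd₄ h₄ hdi₄).1 hu hvd₄)
      (h.exists_mem_and_mem hc hd₃ (hci ▸ hdi₃ ▸ h₂₃))
      (h.exists_mem_and_mem hc hd₄ (hci ▸ hdi₄ ▸ h₂₄))
  exact h₃₄ (hdi₃ ▸ hdi₄ ▸ congrArg f (h.injOn hd₃ hd₄ hd))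

theorem card_le [Fintype ι] (h : IsMultipartiteLineModel Q f e) (hQ : ∀ i, ∃ a ∈ Q, f a ≠ i) :
    #Q ≤ Fintype.card ι + 3 := by
  classical
  calc #Q = ∑ i, #{x ∈ Q | f x = i} := card_eq_sum_card_fiberwise fun x _ => mem_univ (f x)
    _ ≤ ∑ i, (1 + if 1 < #{x ∈ Q | f x = i} then 1 else 0) := by
      refine sum_le_sum fun i _ => ?_
      obtain ⟨a, ha, hai⟩ := hQ i
      have := h.card_fiber_le_two ha hai
      split_ifs <;> omega
    _ = Fintype.card ι + #{i | 1 < #{x ∈ Q | f x = i}} := by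
      rw [sum_add_distrib, sum_boole]
      simp
    _ ≤ Fintype.card ι + 3 := by
      have := h.card_filter_one_lt_card_fiber_le_three
      omega

end IsMultipartiteLineModel

theorem SimpleGraph.Iso.isMultipartiteLineModel {α ι V : Type*} {G : SimpleGraph α}
    {F : SimpleGraph V} (ψ : G ≃g F.lineGraph) {Q : Finset α} {f : α → ι}
    (hQ : ∀ x ∈ Q, ∀ y ∈ Q, x ≠ y → (G.Adj x y ↔ f x ≠ f y)) :
    IsMultipartiteLineModel Q f fun x => (ψ x : Sym2 V) where
  injOn _ _ _ _ hxy := ψ.injective (Subtype.ext hxy)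
  not_isDiag x _ := F.not_isDiag_of_mem_edgeSet (ψ x).2
  meet_iff x hx y hy hne := by
    rw [← hQ x hx y hy hne, ← ψ.map_adj_iff, lineGraph_adj_iff_exists,
      and_iff_right (ψ.injective.ne hne)]

theorem SimpleGraph.deleteEdges_parts_adj {α ι : Type*} (G : SimpleGraph α) {P : ι → Set α}
    {f : α → ι} (hf : ∀ v i, v ∈ P i ↔ f v = i) {x y : α} :
    (G.deleteEdges {e | ∃ i, ∀ z ∈ e, z ∈ P i}).Adj x y ↔ G.Adj x y ∧ f x ≠ f y := by
  simp only [deleteEdges_adj, Set.mem_ofPred_eq, Sym2.mem_iff, forall_eq_or_imp, forall_eq, hf,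
    exists_eq_left']
  exact and_congr_right' ne_comm

theorem big_maximal_clique_is_part_general {α : Type} [Fintype α] (k : ℕ)
    (G : SimpleGraph α)
    (Q : Finset α) (hclique : G.IsClique (Q : Set α))
    (hmax : ∀ R : Finset α, G.IsClique (R : Set α) → Q ⊆ R → R = Q)
    (hcard : k + 4 ≤ Q.card) :
    ∀ P : Fin k → Set α,
      (∀ i, G.IsClique (P i)) →
      (∀ v : α, ∃! i, v ∈ P i) →
      IsLineGraph (G.deleteEdges {e : Sym2 α | ∃ i, ∀ x ∈ e, x ∈ P i}) →
      ∃ i, (Q : Set α) = P i := by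
  classical
  rintro P hP hpart ⟨V, _, F, ⟨ψ⟩⟩
  choose f hf hfu using hpart
  have hPf : ∀ v i, v ∈ P i ↔ f v = i := fun v i => ⟨fun h => (hfu v i h).symm, (· ▸ hf v)⟩
  suffices ∃ i, (Q : Set α) ⊆ P i by
    obtain ⟨i, hi⟩ := this
    refine ⟨i, ?_⟩
    rw [← hmax (P i).toFinset (by simpa using hP i) (by simpa using hi), Set.coe_toFinset]
  by_contra! hQ
  have hmodel := ψ.isMultipartiteLineModel (Q := Q) (f := f) fun x hx y hy hne => by
    rw [G.deleteEdges_parts_adj hPf, and_iff_right (hclique hx hy hne)]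
  have := hmodel.card_le fun i => by
    obtain ⟨a, ha, hai⟩ := Set.not_subset.1 (hQ i)
    exact ⟨a, ha, fun h => hai ((hPf a i).2 h)⟩
  rw [Fintype.card_fin] at this
  omega

/-- If `G` is a proper `k`-color-line graph and `Q` is a maximal clique of `G` with at
least `k + 4` vertices, then in every partition of `V(G)` into `k` cliques whose removal
of internal edges leaves a line graph, `Q` is one of the parts. -/
theorem big_maximal_clique_is_part {α : Type} [Fintype α] (k : ℕ) (hk : 1 ≤ k)
    (G : SimpleGraph α) (hG : IsProperKColorLineGraph k G)
    (Q : Finset α) (hclique : G.IsClique (Q : Set α))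
    (hmax : ∀ R : Finset α, G.IsClique (R : Set α) → Q ⊆ R → R = Q)
    (hcard : k + 4 ≤ Q.card) :
    ∀ P : Fin k → Set α,
      (∀ i, G.IsClique (P i)) →
      (∀ v : α, ∃! i, v ∈ P i) →
      IsLineGraph (G.deleteEdges {e : Sym2 α | ∃ i, ∀ x ∈ e, x ∈ P i}) →
      ∃ i, (Q : Set α) = P i :=
  big_maximal_clique_is_part_general k G Q hclique hmax hcard
end

section
/- A finite simple graph G is a proper 2-color-line graph if and only if the vertex set of G admits a partition V(G) = A ∪ B into two (possibly empty) cliques such that every vertex in A has at most two neighbors in B and every vertex in B has at most two neighbors in A. -/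
open SimpleGraph

/-! In a proper 2-edge-colouring each colour class is a matching, so the edges of one colour form
a clique of `CL(H)`, and an edge meets at most one edge of the other colour at each of its two
endpoints. Conversely, given the two cliques, every vertex `x` becomes an edge of a host graph
whose endpoints are the vertices `s(x, y)` for its at most two neighbours `y` on the other side,
padded with private vertices `(x, i)`; it is coloured by its side. Two such edges then share an
endpoint exactly when their vertices are adjacent across the partition. -/

section ProperEdgeColoring

variable {V C : Type*} {H : SimpleGraph V} {φ : H.edgeSet → C}

theorem IsProperEdgeColoring.subsingleton_incident_color (hφ : IsProperEdgeColoring H φ)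
    (v : V) (c : C) : {f : H.edgeSet | v ∈ (f : Sym2 V) ∧ φ f = c}.Subsingleton := by
  rintro e ⟨hve, rfl⟩ f ⟨hvf, hc⟩
  by_contra hne
  exact hφ e f hne ⟨v, hve, hvf⟩ hc.symm

theorem IsProperEdgeColoring.encard_adj_color_le_two (hφ : IsProperEdgeColoring H φ)
    (e : H.edgeSet) {c : C} (hc : φ e ≠ c) :
    {f | (colorLineGraph H φ).Adj e f ∧ φ f = c}.encard ≤ 2 := by
  obtain ⟨z, hz⟩ := e
  induction z using Sym2.ind with
  | h a b =>
    have hsub : {f | (colorLineGraph H φ).Adj ⟨s(a, b), hz⟩ f ∧ φ f = c} ⊆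
        {f | a ∈ (f : Sym2 V) ∧ φ f = c} ∪ {f | b ∈ (f : Sym2 V) ∧ φ f = c} := by
      rintro f ⟨⟨-, ⟨w, hwe, hwf⟩ | hcol⟩, rfl⟩
      · rcases Sym2.mem_iff.mp hwe with rfl | rfl
        · exact Or.inl ⟨hwf, rfl⟩
        · exact Or.inr ⟨hwf, rfl⟩
      · exact absurd hcol hc
    calc _ ≤ _ := Set.encard_le_encard hsub
      _ ≤ _ := Set.encard_union_le _ _
      _ ≤ 1 + 1 := add_le_add
          (Set.encard_le_one_iff_subsingleton.mpr (hφ.subsingleton_incident_color a c))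
          (Set.encard_le_one_iff_subsingleton.mpr (hφ.subsingleton_incident_color b c))
      _ = 2 := one_add_one_eq_two

variable {α : Type*} {G : SimpleGraph α}

theorem isClique_setOf_color_eq (i : G ≃g colorLineGraph H φ) (c : C) :
    G.IsClique {x | φ (i x) = c} := by
  intro x hx y hy hxy
  exact i.map_adj_iff.mp ⟨i.injective.ne hxy, Or.inr (hx.trans hy.symm)⟩

theorem IsProperEdgeColoring.ncard_neighborSet_inter_color_le_two
    (hφ : IsProperEdgeColoring H φ) (i : G ≃g colorLineGraph H φ) {v : α} {c : C}
    (hc : φ (i v) ≠ c) : (G.neighborSet v ∩ {y | φ (i y) = c}).ncard ≤ 2 := by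
  have hpre : G.neighborSet v ∩ {y | φ (i y) = c} =
      i ⁻¹' {f | (colorLineGraph H φ).Adj (i v) f ∧ φ f = c} := by
    ext y
    simp [i.map_adj_iff]
  rw [hpre, Set.ncard_preimage_of_injective_subset_range i.injective (by simp)]
  exact (Set.encard_le_coe_iff_finite_ncard_le.mp (hφ.encard_adj_color_le_two (i v) hc)).2

end ProperEdgeColoring

theorem exists_sym2_not_isDiag_of_encard_le_two {β : Type*} {s : Set β} (hs : s.encard ≤ 2) {p q : β}
    (hpq : p ≠ q) (hp : p ∉ s) (hq : q ∉ s) :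
    ∃ z : Sym2 β, ¬ z.IsDiag ∧ s ⊆ {w | w ∈ z} ∧ ∀ w ∈ z, w ∈ s ∨ w = p ∨ w = q := by
  obtain ⟨hfin, hcard⟩ := Set.encard_le_coe_iff_finite_ncard_le.mp hs
  interval_cases h : s.ncard
  · obtain rfl := (Set.ncard_eq_zero hfin).mp h
    exact ⟨s(p, q), by simpa using hpq, by simp, by simp⟩
  · obtain ⟨a, rfl⟩ := Set.ncard_eq_one.mp h
    refine ⟨s(a, p), ?_, by simp, by simp⟩
    simpa [eq_comm] using hp
  · obtain ⟨a, b, hab, rfl⟩ := Set.ncard_eq_two.mp h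
    exact ⟨s(a, b), by simpa using hab, by simp [Set.insert_subset_iff], by simp⟩

theorem exists_properEdgeColoring_iso_colorLineGraph_of_edges {α β C : Type*}
    {G : SimpleGraph α} (E : α → Sym2 β) (hE : Function.Injective E)
    (hdiag : ∀ x, ¬ (E x).IsDiag) (χ : α → C)
    (hadj : ∀ x y, G.Adj x y ↔ x ≠ y ∧ ((∃ w, w ∈ E x ∧ w ∈ E y) ∨ χ x = χ y))
    (hprop : ∀ x y, x ≠ y → (∃ w, w ∈ E x ∧ w ∈ E y) → χ x ≠ χ y) :
    ∃ φ : (fromEdgeSet (Set.range E)).edgeSet → C,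
      IsProperEdgeColoring _ φ ∧ Nonempty (G ≃g colorLineGraph _ φ) := by
  set H := fromEdgeSet (Set.range E)
  have hmem : ∀ x, E x ∈ H.edgeSet := fun x => by simp [H, hdiag]
  let e : α ≃ H.edgeSet := Equiv.ofBijective (fun x => ⟨E x, hmem x⟩)
    ⟨fun x y h => hE (congrArg Subtype.val h), by
      rintro ⟨f, hf⟩
      rw [edgeSet_fromEdgeSet] at hf
      obtain ⟨⟨x, rfl⟩, -⟩ := hf
      exact ⟨x, rfl⟩⟩
  have he : ∀ x, (e x : Sym2 β) = E x := fun _ => rfl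
  refine ⟨χ ∘ e.symm, ?_, ⟨⟨e, ?_⟩⟩⟩
  · intro f g hfg hshare
    obtain ⟨x, rfl⟩ := e.surjective f
    obtain ⟨y, rfl⟩ := e.surjective g
    simpa using hprop x y (e.injective.ne_iff.mp hfg) hshare
  · intro x y
    simp [colorLineGraph, hadj, he]

section Realization

variable {α : Type*}

theorem exists_sym2_ports (x : α) {N : Set α} (hN : N.encard ≤ 2) :
    ∃ z : Sym2 (Sym2 α ⊕ α × Fin 2), ¬ z.IsDiag ∧ (∀ b ∈ N, Sum.inl s(x, b) ∈ z) ∧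
      ∀ w ∈ z, (∃ b ∈ N, w = Sum.inl s(x, b)) ∨ ∃ i, w = Sum.inr (x, i) := by
  obtain ⟨z, hz, hsub, hmem⟩ := exists_sym2_not_isDiag_of_encard_le_two
    ((Set.encard_image_le (fun b => Sum.inl s(x, b)) N).trans hN)
    (p := Sum.inr (x, (0 : Fin 2))) (q := Sum.inr (x, 1)) (by simp) (by simp) (by simp)
  refine ⟨z, hz, fun b hb => hsub ⟨b, hb, rfl⟩, fun w hw => ?_⟩
  rcases hmem w hw with ⟨b, hb, rfl⟩ | rfl | rfl
  · exact Or.inl ⟨b, hb, rfl⟩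
  · exact Or.inr ⟨0, rfl⟩
  · exact Or.inr ⟨1, rfl⟩

variable {N : α → Set α} {E : α → Sym2 (Sym2 α ⊕ α × Fin 2)}

theorem eq_inl_of_mem_of_mem
    (hE : ∀ x, ∀ w ∈ E x, (∃ b ∈ N x, w = Sum.inl s(x, b)) ∨ ∃ i, w = Sum.inr (x, i))
    {x y : α} (hxy : x ≠ y) {w : Sym2 α ⊕ α × Fin 2} (hwx : w ∈ E x) (hwy : w ∈ E y) :
    y ∈ N x ∧ w = Sum.inl s(x, y) := by
  rcases hE x w hwx with ⟨b, hb, rfl⟩ | ⟨i, rfl⟩ <;>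
    rcases hE y _ hwy with ⟨c, -, hc⟩ | ⟨j, hj⟩
  · rcases Sym2.eq_iff.mp (Sum.inl_injective hc) with ⟨rfl, -⟩ | ⟨-, rfl⟩
    · exact absurd rfl hxy
    · exact ⟨hb, rfl⟩
  · exact absurd hj Sum.inl_ne_inr
  · exact absurd hc Sum.inr_ne_inl
  · exact absurd (Prod.ext_iff.mp (Sum.inr_injective hj)).1 hxy

-- Distinct `E x` share at most the single vertex `s(x, y)`, while a non-diagonal `E x` has two.
theorem injective_of_not_isDiag (hdiag : ∀ x, ¬ (E x).IsDiag)
    (hE : ∀ x, ∀ w ∈ E x, (∃ b ∈ N x, w = Sum.inl s(x, b)) ∨ ∃ i, w = Sum.inr (x, i)) :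
    Function.Injective E := by
  intro x y hxy
  by_contra hne
  have hw := Sym2.out_fst_mem (E x)
  have hw' := Sym2.other_mem hw
  refine Sym2.other_ne (hdiag x) hw ?_
  rw [(eq_inl_of_mem_of_mem hE hne hw' (hxy ▸ hw')).2,
    (eq_inl_of_mem_of_mem hE hne hw (hxy ▸ hw)).2]

variable {C : Type*} {G : SimpleGraph α}

theorem exists_properEdgeColoring_iso_colorLineGraph (χ : α → C)
    (hclique : ∀ x y, x ≠ y → χ x = χ y → G.Adj x y)
    (hcross : ∀ x, {y | G.Adj x y ∧ χ x ≠ χ y}.encard ≤ 2) :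
    ∃ (H : SimpleGraph (Sym2 α ⊕ α × Fin 2)) (φ : H.edgeSet → C),
      IsProperEdgeColoring H φ ∧ Nonempty (G ≃g colorLineGraph H φ) := by
  choose E hdiag hinl hmem using fun x => exists_sym2_ports x (hcross x)
  have hshare : ∀ x y, x ≠ y → ((∃ w, w ∈ E x ∧ w ∈ E y) ↔ G.Adj x y ∧ χ x ≠ χ y) := by
    refine fun x y hxy => ⟨fun ⟨w, hwx, hwy⟩ => (eq_inl_of_mem_of_mem hmem hxy hwx hwy).1,
      fun hy => ⟨_, hinl x y hy, ?_⟩⟩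
    rw [Sym2.eq_swap]
    exact hinl y x ⟨hy.1.symm, hy.2.symm⟩
  refine ⟨_, exists_properEdgeColoring_iso_colorLineGraph_of_edges E
    (injective_of_not_isDiag hdiag hmem) hdiag χ (fun x y => ?_)
    (fun x y hxy hxy' => ((hshare x y hxy).mp hxy').2)⟩
  by_cases hxy : x = y
  · simp [hxy]
  rw [hshare x y hxy]
  by_cases hχ : χ x = χ y
  · simp [hxy, hχ, hclique x y hxy hχ]
  · simp [hxy, hχ]

end Realization

theorem isProperKColorLineGraph_two_of_isClique {α : Type} [Fintype α] {G : SimpleGraph α}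
    {A B : Set α} (hunion : A ∪ B = Set.univ) (hA : G.IsClique A) (hB : G.IsClique B)
    (hAB : ∀ v ∈ A, (G.neighborSet v ∩ B).ncard ≤ 2)
    (hBA : ∀ v ∈ B, (G.neighborSet v ∩ A).ncard ≤ 2) :
    IsProperKColorLineGraph 2 G := by
  classical
  let χ : α → Fin 2 := fun x => if x ∈ A then 0 else 1
  have hB_of_notMem : ∀ x, x ∉ A → x ∈ B := fun x hx =>
    ((Set.eq_univ_iff_forall.mp hunion x).resolve_left hx)
  have hclique : ∀ x y, x ≠ y → χ x = χ y → G.Adj x y := by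
    intro x y hxy hχ
    by_cases hx : x ∈ A <;> by_cases hy : y ∈ A <;> simp [χ, hx, hy] at hχ
    · exact hA hx hy hxy
    · exact hB (hB_of_notMem x hx) (hB_of_notMem y hy) hxy
  have hcross : ∀ x, {y | G.Adj x y ∧ χ x ≠ χ y}.encard ≤ 2 := by
    intro x
    rw [← (Set.toFinite _).cast_ncard_eq, Nat.cast_le_ofNat]
    by_cases hx : x ∈ A
    · refine le_trans (Set.ncard_le_ncard ?_) (hAB x hx)
      rintro y ⟨hxy, hχ⟩
      exact ⟨hxy, hB_of_notMem y fun hy => hχ (by simp [χ, hx, hy])⟩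
    · refine le_trans (Set.ncard_le_ncard ?_) (hBA x (hB_of_notMem x hx))
      rintro y ⟨hxy, hχ⟩
      exact ⟨hxy, by_contra fun hy => hχ (by simp [χ, hx, hy])⟩
  obtain ⟨H, φ, hφ, hiso⟩ := exists_properEdgeColoring_iso_colorLineGraph χ hclique hcross
  exact ⟨_, inferInstance, H, φ, hφ, hiso⟩

/-- `G` is a proper 2-color-line graph iff `V(G)` can be partitioned into two (possibly
empty) cliques `A`, `B` such that every vertex of `A` has at most two neighbors in `B`
and vice versa. -/
theorem properTwoColorLine_iff_bicliquePartition {α : Type} [Fintype α]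
    (G : SimpleGraph α) :
    IsProperKColorLineGraph 2 G ↔
      ∃ A B : Set α,
        Disjoint A B ∧ A ∪ B = Set.univ ∧
        G.IsClique A ∧ G.IsClique B ∧
        (∀ v ∈ A, (G.neighborSet v ∩ B).ncard ≤ 2) ∧
        (∀ v ∈ B, (G.neighborSet v ∩ A).ncard ≤ 2) := by
  constructor
  · rintro ⟨V, _, H, φ, hφ, ⟨i⟩⟩
    refine ⟨{x | φ (i x) = 0}, {x | φ (i x) = 1}, ?_, ?_, isClique_setOf_color_eq i 0,
      isClique_setOf_color_eq i 1,
      fun v hv => hφ.ncard_neighborSet_inter_color_le_two i (by simp_all),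
      fun v hv => hφ.ncard_neighborSet_inter_color_le_two i (by simp_all)⟩
    · exact Set.disjoint_left.mpr fun x h0 h1 => by simp_all
    · ext x
      simp only [Set.mem_union, Set.mem_ofPred_eq, Set.mem_univ, iff_true]
      omega
  · rintro ⟨A, B, -, hunion, hA, hB, hAB, hBA⟩
    exact isProperKColorLineGraph_two_of_isClique hunion hA hB hAB hBA
end

section
/- Let B be a finite bipartite graph with parts X and Y, and let G be the graph obtained from B by adding all edges between distinct vertices of X, all edges between distinct vertices of Y, and two new vertices x and y, where x is adjacent exactly to all vertices of X and y is adjacent exactly to all vertices of Y. Then B is the line bigraph of two graphs H1 = (V, E1) and H2 = (V, E2) on a common vertex set V with E1 ∩ E2 = ∅ if and only if G is a 2-color-line graph. -/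
open SimpleGraph

/-- The line bigraph of two graphs `H₁`, `H₂` on a common vertex set: its vertices are
the disjoint union `E(H₁) ⊕ E(H₂)`, and `e₁ ∈ E(H₁)` is adjacent to `e₂ ∈ E(H₂)` iff
they share an endpoint; there are no edges inside `E(H₁)` or inside `E(H₂)`. -/
def lineBigraph {V : Type*} (H₁ H₂ : SimpleGraph V) :
    SimpleGraph (H₁.edgeSet ⊕ H₂.edgeSet) where
  Adj u v := ∃ (e₁ : H₁.edgeSet) (e₂ : H₂.edgeSet),
      (∃ x, x ∈ (e₁ : Sym2 V) ∧ x ∈ (e₂ : Sym2 V)) ∧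
      ((u = Sum.inl e₁ ∧ v = Sum.inr e₂) ∨ (u = Sum.inr e₂ ∧ v = Sum.inl e₁))
  symm := by
    constructor
    rintro u v ⟨e₁, e₂, hx, h | h⟩
    · exact ⟨e₁, e₂, hx, Or.inr ⟨h.2, h.1⟩⟩
    · exact ⟨e₁, e₂, hx, Or.inl ⟨h.2, h.1⟩⟩
  loopless := by
    constructor
    rintro u ⟨e₁, e₂, hx, ⟨h1, h2⟩ | ⟨h1, h2⟩⟩ <;> rw [h1] at h2 <;> simp at h2

/-- The ordered adjacency cases used to build the augmented graph `G` from a bipartite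
graph `B` with parts `X`, `Y`: all pairs inside `X`, all pairs inside `Y`, the edges of
`B`, the new vertex `x = Sum.inr 0` joined to `X`, and `y = Sum.inr 1` joined to `Y`. -/
def augRel {X Y : Type*} (B : SimpleGraph (X ⊕ Y)) :
    (X ⊕ Y) ⊕ Fin 2 → (X ⊕ Y) ⊕ Fin 2 → Prop := fun u v =>
  (∃ a a' : X, u = Sum.inl (Sum.inl a) ∧ v = Sum.inl (Sum.inl a')) ∨
  (∃ b b' : Y, u = Sum.inl (Sum.inr b) ∧ v = Sum.inl (Sum.inr b')) ∨
  (∃ p q : X ⊕ Y, u = Sum.inl p ∧ v = Sum.inl q ∧ B.Adj p q) ∨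
  (∃ a : X, u = Sum.inl (Sum.inl a) ∧ v = Sum.inr 0) ∨
  (∃ b : Y, u = Sum.inl (Sum.inr b) ∧ v = Sum.inr 1)

/-- The graph `G` obtained from a bipartite graph `B` with parts `X`, `Y` by completing
`X` and `Y` to cliques and adding two new vertices `x`, `y`, with `x` adjacent exactly
to the vertices of `X` and `y` adjacent exactly to the vertices of `Y`. -/
def augGraph {X Y : Type*} (B : SimpleGraph (X ⊕ Y)) :
    SimpleGraph ((X ⊕ Y) ⊕ Fin 2) where
  Adj u v := u ≠ v ∧ (augRel B u v ∨ augRel B v u)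
  symm := by constructor; rintro u v ⟨hne, h⟩; exact ⟨hne.symm, h.symm⟩
  loopless := by constructor; rintro u ⟨hne, -⟩; exact hne rfl

/-! Both sides amount to a model of `B` by edges: the vertices of `B` go injectively to edges of
a graph on some `V`, so that `a ∈ X` and `b ∈ Y` are adjacent exactly when their edges meet.
Given such a model, `G` is the color-line graph of these edges together with two new disjoint
edges for `x` and `y`, where the edges of `X ∪ {x}` get color 0 and those of `Y ∪ {y}` color 1.
Conversely, in a 2-colored representation of `G` the non-adjacent vertices `x` and `y` get
different colors, and each vertex of `X` (non-adjacent to `y`) gets the color of `x`, each vertex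
of `Y` that of `y`. Between `X` and `Y`, adjacency in `G` is therefore just the meeting of edges,
and the edges of `X` and of `Y` form `H₁` and `H₂`. -/

open Function Sum

namespace SimpleGraph

lemma edgeSet_fromEdgeSet_range {α W : Type*} {f : α → Sym2 W} (hf : ∀ a, ¬ (f a).IsDiag) :
    (fromEdgeSet (Set.range f)).edgeSet = Set.range f := by
  rw [edgeSet_fromEdgeSet, sdiff_eq_left, Set.disjoint_left]
  rintro _ ⟨a, rfl⟩
  exact hf a

noncomputable def equivEdgeSetFromEdgeSetRange {α W : Type*} {f : α → Sym2 W} (hf : Injective f)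
    (hd : ∀ a, ¬ (f a).IsDiag) : α ≃ (fromEdgeSet (Set.range f)).edgeSet :=
  (Equiv.ofInjective f hf).trans (Equiv.setCongr (edgeSet_fromEdgeSet_range hd).symm)

@[simp]
lemma coe_equivEdgeSetFromEdgeSetRange {α W : Type*} {f : α → Sym2 W} (hf : Injective f)
    (hd : ∀ a, ¬ (f a).IsDiag) (a : α) :
    (equivEdgeSetFromEdgeSetRange hf hd a : Sym2 W) = f a :=
  rfl

end SimpleGraph

open SimpleGraph

lemma isKColorLineGraph_of_injective {k : ℕ} {α : Type*} {W : Type} [Fintype W]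
    (G : SimpleGraph α) (F : α → Sym2 W) (hF : Injective F) (hd : ∀ u, ¬ (F u).IsDiag)
    (c : α → Fin k)
    (hadj : ∀ u v, u ≠ v → (G.Adj u v ↔ (∃ w, w ∈ F u ∧ w ∈ F v) ∨ c u = c v)) :
    IsKColorLineGraph k G := by
  let e := equivEdgeSetFromEdgeSetRange hF hd
  refine ⟨W, inferInstance, _, c ∘ e.symm, ⟨{ toEquiv := e, map_rel_iff' := ?_ }⟩⟩
  intro u v
  by_cases huv : u = v
  · subst huv
    exact iff_of_false (colorLineGraph _ _).irrefl G.irrefl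
  · simp [colorLineGraph, e, huv, hadj u v huv]

lemma colorLineGraph_color_ne_of_not_adj {V C : Type*} {H : SimpleGraph V} {φ : H.edgeSet → C}
    {e f : H.edgeSet} (hne : e ≠ f) (hadj : ¬ (colorLineGraph H φ).Adj e f) : φ e ≠ φ f :=
  fun h => hadj ⟨hne, Or.inr h⟩

lemma lineBigraph_adj_inl_inr {V : Type*} {H₁ H₂ : SimpleGraph V}
    (e₁ : H₁.edgeSet) (e₂ : H₂.edgeSet) :
    (lineBigraph H₁ H₂).Adj (inl e₁) (inr e₂) ↔ ∃ x, x ∈ (e₁ : Sym2 V) ∧ x ∈ (e₂ : Sym2 V) := by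
  simp [lineBigraph]

lemma lineBigraph_not_adj_inl_inl {V : Type*} {H₁ H₂ : SimpleGraph V} (e e' : H₁.edgeSet) :
    ¬ (lineBigraph H₁ H₂).Adj (inl e) (inl e') := by
  simp [lineBigraph]

lemma lineBigraph_not_adj_inr_inr {V : Type*} {H₁ H₂ : SimpleGraph V} (e e' : H₂.edgeSet) :
    ¬ (lineBigraph H₁ H₂).Adj (inr e) (inr e') := by
  simp [lineBigraph]

def augSide {X Y : Type*} : (X ⊕ Y) ⊕ Fin 2 → Fin 2
  | inl (inl _) => 0
  | inl (inr _) => 1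
  | inr i => i

lemma augGraph_adj_iff {X Y : Type*} (B : SimpleGraph (X ⊕ Y)) (u v : (X ⊕ Y) ⊕ Fin 2) :
    (augGraph B).Adj u v ↔
      u ≠ v ∧ (augSide u = augSide v ∨ ∃ p q, u = inl p ∧ v = inl q ∧ B.Adj p q) := by
  rcases u with ((a | b) | i) <;> rcases v with ((a' | b') | j) <;>
    simp [augGraph, augRel, augSide, B.adj_comm, eq_comm]

lemma augGraph_adj_inl_inr {X Y : Type*} (B : SimpleGraph (X ⊕ Y)) (a : X) (b : Y) :
    (augGraph B).Adj (inl (inl a)) (inl (inr b)) ↔ B.Adj (inl a) (inr b) := by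
  simp [augGraph_adj_iff, augSide]

lemma augGraph_not_adj_inr {X Y : Type*} (B : SimpleGraph (X ⊕ Y)) {u : (X ⊕ Y) ⊕ Fin 2}
    {i : Fin 2} (h : augSide u ≠ i) : ¬ (augGraph B).Adj u (inr i) := by
  rw [augGraph_adj_iff]
  rintro ⟨-, hside | ⟨p, q, -, hq, -⟩⟩
  exacts [h hside, inr_ne_inl hq]

structure IsEdgeIntersectionModel {X Y V : Type*} (B : SimpleGraph (X ⊕ Y))
    (ε : X ⊕ Y → Sym2 V) : Prop where
  injective : Injective ε
  not_isDiag : ∀ p, ¬ (ε p).IsDiag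
  adj_iff : ∀ a b, B.Adj (inl a) (inr b) ↔ ∃ v, v ∈ ε (inl a) ∧ v ∈ ε (inr b)

namespace IsEdgeIntersectionModel

variable {X Y : Type*} {B : SimpleGraph (X ⊕ Y)}

lemma of_lineBigraph_iso {V : Type*} {H₁ H₂ : SimpleGraph V}
    (hd : Disjoint H₁.edgeSet H₂.edgeSet) (ψ : B ≃g lineBigraph H₁ H₂)
    (hX : ∀ a : X, ∃ e : H₁.edgeSet, ψ (inl a) = inl e)
    (hY : ∀ b : Y, ∃ e : H₂.edgeSet, ψ (inr b) = inr e) :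
    IsEdgeIntersectionModel B (fun p => Sum.elim Subtype.val Subtype.val (ψ p)) where
  injective := by
    refine (Subtype.val_injective.sumElim Subtype.val_injective ?_).comp ψ.injective
    intro e₁ e₂ h
    exact Set.disjoint_left.1 hd e₁.2 (h ▸ e₂.2)
  not_isDiag p := by
    rcases ψ p with e | e <;> exact not_isDiag_of_mem_edgeSet _ e.2
  adj_iff a b := by
    obtain ⟨e₁, he₁⟩ := hX a
    obtain ⟨e₂, he₂⟩ := hY b
    rw [← ψ.map_rel_iff, he₁, he₂, lineBigraph_adj_inl_inr, elim_inl, elim_inr]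

lemma of_colorLineGraph_iso {V : Type*} {H : SimpleGraph V} {φ : H.edgeSet → Fin 2}
    (f : augGraph B ≃g colorLineGraph H φ) :
    IsEdgeIntersectionModel B (fun p => (f (inl p) : Sym2 V)) where
  injective := Subtype.val_injective.comp (f.injective.comp inl_injective)
  not_isDiag p := not_isDiag_of_mem_edgeSet _ (f (inl p)).2
  adj_iff a b := by
    have hne : ∀ u i, augSide u ≠ i → φ (f u) ≠ φ (f (inr i)) := fun u i h =>
      colorLineGraph_color_ne_of_not_adj (f.injective.ne (by rintro rfl; exact h rfl))
        (f.map_rel_iff.not.2 (augGraph_not_adj_inr B h))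
    have fin_two : ∀ c d e : Fin 2, c ≠ e → d ≠ e → c = d := by decide
    have hcolor : φ (f (inl (inl a))) ≠ φ (f (inl (inr b))) := by
      rw [fin_two _ _ _ (hne (inl (inl a)) 1 zero_ne_one) (hne (inr 0) 1 zero_ne_one)]
      exact (hne (inl (inr b)) 0 one_ne_zero).symm
    rw [← augGraph_adj_inl_inr, ← f.map_rel_iff]
    exact ⟨fun h => h.2.resolve_right hcolor,
      fun h => ⟨f.injective.ne (by simp), Or.inl h⟩⟩

lemma adj_inr_inl {V : Type*} {ε : X ⊕ Y → Sym2 V} (hε : IsEdgeIntersectionModel B ε)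
    (b : Y) (a : X) : B.Adj (inr b) (inl a) ↔ ∃ v, v ∈ ε (inr b) ∧ v ∈ ε (inl a) := by
  rw [B.adj_comm, hε.adj_iff]
  exact exists_congr fun _ => and_comm

lemma exists_lineBigraph_iso {W : Type} [Fintype W] {ε : X ⊕ Y → Sym2 W}
    (hε : IsEdgeIntersectionModel B ε)
    (hbip : ∀ u v : X ⊕ Y, B.Adj u v → (u.isLeft ∧ v.isRight) ∨ (u.isRight ∧ v.isLeft)) :
    ∃ (V : Type) (_ : Fintype V) (H₁ H₂ : SimpleGraph V),
      Disjoint H₁.edgeSet H₂.edgeSet ∧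
      ∃ ψ : B ≃g lineBigraph H₁ H₂,
        (∀ a : X, ∃ e : H₁.edgeSet, ψ (inl a) = inl e) ∧
        (∀ b : Y, ∃ e : H₂.edgeSet, ψ (inr b) = inr e) := by
  have hXd : ∀ a, ¬ ((ε ∘ inl) a).IsDiag := fun a => hε.not_isDiag (inl a)
  have hYd : ∀ b, ¬ ((ε ∘ inr) b).IsDiag := fun b => hε.not_isDiag (inr b)
  let eX := equivEdgeSetFromEdgeSetRange (hε.injective.comp inl_injective) hXd
  let eY := equivEdgeSetFromEdgeSetRange (hε.injective.comp inr_injective) hYd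
  have hd : Disjoint (fromEdgeSet (Set.range (ε ∘ inl))).edgeSet
      (fromEdgeSet (Set.range (ε ∘ inr))).edgeSet := by
    rw [edgeSet_fromEdgeSet_range hXd, edgeSet_fromEdgeSet_range hYd, Set.disjoint_left]
    rintro _ ⟨a, rfl⟩ ⟨b, hb⟩
    exact inr_ne_inl (hε.injective hb)
  refine ⟨W, inferInstance, _, _, hd, ⟨eX.sumCongr eY, ?_⟩,
    fun a => ⟨eX a, rfl⟩, fun b => ⟨eY b, rfl⟩⟩
  rintro (a | b) (a' | b')
  · exact iff_of_false (lineBigraph_not_adj_inl_inl _ _) (fun h => by simpa using hbip _ _ h)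
  · simp [eX, eY, lineBigraph_adj_inl_inr, hε.adj_iff]
  · rw [adj_comm, B.adj_comm]
    simp [eX, eY, lineBigraph_adj_inl_inr, hε.adj_iff]
  · exact iff_of_false (lineBigraph_not_adj_inr_inr _ _) (fun h => by simpa using hbip _ _ h)

lemma isKColorLineGraph_augGraph {V : Type} [Fintype V] {ε : X ⊕ Y → Sym2 V}
    (hε : IsEdgeIntersectionModel B ε) : IsKColorLineGraph 2 (augGraph B) := by
  let F : (X ⊕ Y) ⊕ Fin 2 → Sym2 (V ⊕ Fin 2 × Bool) :=
    Sum.elim (fun p => (ε p).map inl) (fun i => s(inr (i, false), inr (i, true)))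
  have hinl_ne : ∀ p (i : Fin 2), (ε p).map inl ≠ s(inr (i, false), inr (i, true)) := by
    intro p i h
    have : (inr (i, false) : V ⊕ Fin 2 × Bool) ∈ (ε p).map inl := h ▸ Sym2.mem_mk_left _ _
    simp [Sym2.mem_map] at this
  refine isKColorLineGraph_of_injective _ F ?_ ?_ augSide ?_
  · refine ((Sym2.map.injective inl_injective).comp hε.injective).sumElim ?_ hinl_ne
    intro i j h
    simpa using h
  · rintro (p | i)
    · simpa [F, Sym2.isDiag_map inl_injective] using hε.not_isDiag p
    · simp [F]
  · intro u v huv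
    rw [augGraph_adj_iff]
    simp only [ne_eq, huv, not_false_eq_true, true_and]
    rcases u with ((a | b) | i) <;> rcases v with ((a' | b') | j) <;>
      simp [F, augSide, Sym2.mem_map, hε.adj_iff, hε.adj_inr_inl]

end IsEdgeIntersectionModel

theorem lineBigraph_iff_twoColorLine_general {X Y : Type}
    (B : SimpleGraph (X ⊕ Y))
    (hbip : ∀ u v : X ⊕ Y, B.Adj u v →
      (u.isLeft ∧ v.isRight) ∨ (u.isRight ∧ v.isLeft)) :
    (∃ (V : Type) (_ : Fintype V) (H₁ H₂ : SimpleGraph V),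
        Disjoint H₁.edgeSet H₂.edgeSet ∧
        ∃ ψ : B ≃g lineBigraph H₁ H₂,
          (∀ a : X, ∃ e : H₁.edgeSet, ψ (Sum.inl a) = Sum.inl e) ∧
          (∀ b : Y, ∃ e : H₂.edgeSet, ψ (Sum.inr b) = Sum.inr e)) ↔
      IsKColorLineGraph 2 (augGraph B) := by
  constructor
  · rintro ⟨V, _, H₁, H₂, hd, ψ, hX, hY⟩
    exact (IsEdgeIntersectionModel.of_lineBigraph_iso hd ψ hX hY).isKColorLineGraph_augGraph
  · rintro ⟨V, _, H, φ, ⟨f⟩⟩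
    exact (IsEdgeIntersectionModel.of_colorLineGraph_iso f).exists_lineBigraph_iso hbip

/-- A bipartite graph `B` with parts `X`, `Y` is the line bigraph of two graphs
`H₁ = (V, E₁)`, `H₂ = (V, E₂)` with `E₁ ∩ E₂ = ∅` iff the augmented graph `G` is a
2-color-line graph. -/
theorem lineBigraph_iff_twoColorLine {X Y : Type} [Fintype X] [Fintype Y]
    (B : SimpleGraph (X ⊕ Y))
    (hbip : ∀ u v : X ⊕ Y, B.Adj u v →
      (u.isLeft ∧ v.isRight) ∨ (u.isRight ∧ v.isLeft)) :
    (∃ (V : Type) (_ : Fintype V) (H₁ H₂ : SimpleGraph V),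
        Disjoint H₁.edgeSet H₂.edgeSet ∧
        ∃ ψ : B ≃g lineBigraph H₁ H₂,
          (∀ a : X, ∃ e : H₁.edgeSet, ψ (Sum.inl a) = Sum.inl e) ∧
          (∀ b : Y, ∃ e : H₂.edgeSet, ψ (Sum.inr b) = Sum.inr e)) ↔
      IsKColorLineGraph 2 (augGraph B) :=
  lineBigraph_iff_twoColorLine_general B hbip
end
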